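/- arXiv:1910.10300 — 10 statements merged into one kernel-verified Lean document; each statement's English description precedes it below -/
import Mathlib

section
/- Let n ≥ 1, let S ⊆ ℝ × ℝⁿ be a closed set, and let u : ℝ × ℝⁿ → ℝⁿ be a map that is locally Lipschitz on S (every point of S has a neighborhood on which u restricted to S is Lipschitz) and linearly bounded on S, i.e., there exist γ, c ∈ [0,∞) with ‖u(t,q)‖ ≤ γ‖q‖ + c for all (t,q) ∈ S. Then there exists a map ũ : ℝ × ℝⁿ → ℝⁿ such that: (i) ũ(x) = u(x) for all x ∈ S; (ii) ũ is continuous on ℝ × ℝⁿ; (iii) ũ is locally Lipschitz on (ℝ × ℝⁿ) \ S; and (iv) ũ is linearly bounded on ℝ × ℝⁿ, indeed ‖ũ(t,q)‖ ≤ 12^{n+1}(γ‖q‖ + c + γ) for all (t,q) ∈ ℝ × ℝⁿ. -/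
open Topology

open Set Metric Manifold NNReal

theorem aux_smul_lip {α E : Type*} [PseudoMetricSpace α] [NormedAddCommGroup E]
    [NormedSpace ℝ E] {f : α → ℝ} {g : α → E} {s : Set α} {Kf Kg : ℝ≥0} {A B : ℝ}
    (hA : 0 ≤ A) (hB : 0 ≤ B)
    (hf : LipschitzOnWith Kf f s) (hg : LipschitzOnWith Kg g s)
    (hfA : ∀ x ∈ s, |f x| ≤ A) (hgB : ∀ x ∈ s, ‖g x‖ ≤ B) :
    ∃ K : ℝ≥0, LipschitzOnWith K (fun x => f x • g x) s := by
  refine ⟨Kf * B.toNNReal + A.toNNReal * Kg, LipschitzOnWith.of_dist_le_mul fun x hx y hy => ?_⟩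
  have h2 := hf.dist_le_mul x hx y hy
  have h3 := hg.dist_le_mul x hx y hy
  rw [Real.dist_eq] at h2
  rw [dist_eq_norm] at h3
  have hcoe : ((Kf * B.toNNReal + A.toNNReal * Kg : ℝ≥0) : ℝ) = ↑Kf * B + A * ↑Kg := by
    push_cast [Real.coe_toNNReal _ hA, Real.coe_toNNReal _ hB]; ring
  rw [hcoe]
  have h1 : dist (f x • g x) (f y • g y) ≤ |f x - f y| * ‖g x‖ + |f y| * ‖g x - g y‖ := by
    rw [dist_eq_norm]
    have he : f x • g x - f y • g y = (f x - f y) • g x + f y • (g x - g y) := by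
      rw [sub_smul, smul_sub]; abel
    rw [he]
    refine (norm_add_le _ _).trans ?_
    rw [norm_smul, norm_smul, Real.norm_eq_abs, Real.norm_eq_abs]
  calc dist (f x • g x) (f y • g y) ≤ |f x - f y| * ‖g x‖ + |f y| * ‖g x - g y‖ := h1
    _ ≤ (↑Kf * dist x y) * B + A * (↑Kg * dist x y) := by
        refine add_le_add (mul_le_mul h2 (hgB x hx) (norm_nonneg _) (by positivity)) ?_
        exact mul_le_mul (hfA y hy) h3 (norm_nonneg _) hA
    _ = (↑Kf * B + A * ↑Kg) * dist x y := by ring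

theorem aux_ext {X E : Type*} [NormedAddCommGroup X] [NormedSpace ℝ X] [FiniteDimensional ℝ X]
    [NormedAddCommGroup E] [NormedSpace ℝ E] [FiniteDimensional ℝ E]
    {S : Set X} (hS : IsClosed S) (hne : S.Nonempty) (g₀ : X → E) (hg₀ : Continuous g₀)
    (hb : ∀ x, ‖g₀ x‖ ≤ 1) :
    ∃ w : X → E, (∀ x ∈ S, w x = g₀ x) ∧ Continuous w ∧
      (∀ x ∉ S, ContDiffAt ℝ 1 w x) ∧ (∀ x, ‖w x‖ ≤ 1) := by
  classical
  let O : TopologicalSpace.Opens X := ⟨Sᶜ, hS.isOpen_compl⟩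
  haveI : LocallyCompactSpace ↥O := hS.isOpen_compl.locallyCompactSpace
  set t : ↥O → Set E := fun y => closedBall (g₀ ↑y) (infDist (↑y : X) S) ∩ closedBall 0 1 with ht_def
  have ht : ∀ y, Convex ℝ (t y) := fun y => (convex_closedBall _ _).inter (convex_closedBall _ _)
  have Hloc : ∀ x : ↥O, ∃ c : E, ∀ᶠ y in 𝓝 x, c ∈ t y := by
    intro x
    refine ⟨g₀ ↑x, ?_⟩
    have hd : 0 < infDist (↑x : X) S := (hS.notMem_iff_infDist_pos hne).1 x.2
    have h1 : ∀ᶠ z in 𝓝 (↑x : X), dist (g₀ z) (g₀ ↑x) < infDist (↑x : X) S / 2 :=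
      Metric.tendsto_nhds.mp (hg₀.tendsto ↑x) _ (by positivity)
    have h2 : ∀ᶠ z in 𝓝 (↑x : X), infDist (↑x : X) S / 2 < infDist z S :=
      ((continuous_infDist_pt S).tendsto ↑x).eventually (eventually_gt_nhds (by linarith))
    have hev : ∀ᶠ z in 𝓝 (↑x : X), g₀ ↑x ∈ closedBall (g₀ z) (infDist z S) ∩ closedBall 0 1 := by
      filter_upwards [h1, h2] with z hz1 hz2
      refine ⟨mem_closedBall.2 ?_, by simpa using hb (x : X)⟩
      rw [dist_comm]
      linarith
    exact (continuous_subtype_val.tendsto x).eventually hev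
  obtain ⟨h, hh⟩ := exists_contMDiffMap_forall_mem_convex_of_local_const (𝓘(ℝ, X)) (n := (⊤ : ℕ∞)) ht Hloc
  set w : X → E := fun y => if hy : y ∈ O then h ⟨y, hy⟩ else g₀ y with hw_def
  have hwS : ∀ x ∈ S, w x = g₀ x := by
    intro x hx
    have : x ∉ O := by simpa [O] using hx
    simp [w, this]
  have hw1 : ∀ y, ‖w y - g₀ y‖ ≤ infDist y S := by
    intro y
    by_cases hy : y ∈ O
    · have := (hh ⟨y, hy⟩).1
      simpa [w, hy, ← dist_eq_norm] using this
    · simpa [w, hy] using infDist_nonneg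
  have hwb : ∀ y, ‖w y‖ ≤ 1 := by
    intro y
    by_cases hy : y ∈ O
    · have := (hh ⟨y, hy⟩).2
      simpa [w, hy, mem_closedBall, dist_zero_right] using this
    · simpa [w, hy] using hb y
  have hsm : ∀ x ∉ S, ContDiffAt ℝ 1 w x := by
    intro x hx
    have hxO : x ∈ O := by simpa [O] using hx
    have hmd : ContMDiffAt (𝓘(ℝ, X)) (𝓘(ℝ, E)) 1 h (⟨x, hxO⟩ : ↥O) :=
      ((h.contMDiff).of_le (by exact_mod_cast (le_top : (1:ℕ∞) ≤ ⊤))).contMDiffAt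
    rw [contMDiffAt_iff] at hmd
    obtain ⟨-, hcd⟩ := hmd
    simp only [extChartAt_model_space_eq_id, PartialEquiv.refl_coe, Function.comp_def, id_eq,
      modelWithCornersSelf_coe, Set.range_id, contDiffWithinAt_univ] at hcd
    have hev : (fun y => h ((extChartAt (𝓘(ℝ, X)) (⟨x, hxO⟩ : ↥O)).symm y)) =ᶠ[𝓝 x] w := by
      have h0 := TopologicalSpace.Opens.chartAt_subtype_val_symm_eventuallyEq (H := X) O
        (x := ⟨x, hxO⟩)
      simp only [chartAt_self_eq, PartialHomeomorph.refl_symm, PartialHomeomorph.refl_apply,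
        id_eq] at h0
      filter_upwards [h0] with y hy
      have hz : (((chartAt X (⟨x, hxO⟩ : ↥O)).symm y : ↥O) : X) = y := by
        simpa [Function.comp] using hy.symm
      have hyO : y ∈ O := by rw [← hz]; exact ((chartAt X (⟨x, hxO⟩ : ↥O)).symm y).2
      have hee : ((extChartAt (𝓘(ℝ, X)) (⟨x, hxO⟩ : ↥O)).symm y) =
          (chartAt X (⟨x, hxO⟩ : ↥O)).symm y := by
        simp [extChartAt, OpenPartialHomeomorph.extend]
      rw [hee]
      exact (congrArg h (Subtype.ext hz)).trans (show w y = h ⟨y, hyO⟩ from dif_pos hyO).symm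
    have hpt : (extChartAt (𝓘(ℝ, X)) (⟨x, hxO⟩ : ↥O)) ⟨x, hxO⟩ = x := by
      show (chartAt X (⟨x, hxO⟩ : ↥O) : ↥O → X) ⟨x, hxO⟩ = x
      rw [show chartAt X (⟨x, hxO⟩ : ↥O)
          = (chartAt X (x : X)).subtypeRestr (⟨⟨x, hxO⟩⟩ : Nonempty ↥O) from rfl]
      simp [chartAt_self_eq]
    rw [hpt] at hcd
    exact hcd.congr_of_eventuallyEq hev.symm
  have hwc : Continuous w := by
    rw [continuous_iff_continuousAt]
    intro x
    by_cases hx : x ∈ S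
    · have hz : Filter.Tendsto (fun y => w y - g₀ y) (𝓝 x) (𝓝 0) := by
        apply squeeze_zero_norm hw1
        have := (continuous_infDist_pt S).tendsto x
        rwa [infDist_zero_of_mem hx] at this
      have : Filter.Tendsto w (𝓝 x) (𝓝 (0 + g₀ x)) := by
        simpa using hz.add (hg₀.tendsto x)
      rw [zero_add] at this
      rwa [ContinuousAt, hwS x hx]
    · exact (hsm x hx).continuousAt
  exact ⟨w, hwS, hwc, hsm, hwb⟩

/-- A map that is locally Lipschitz and linearly bounded on a closed set
`S ⊆ ℝ × ℝⁿ` admits an extension that agrees with it on `S`, is continuous everywhere,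
locally Lipschitz off `S`, and linearly bounded with constant `12^(n+1)`. -/
theorem continuous_extension_of_locallyLipschitzOn_closed
    (n : ℕ) (hn : 1 ≤ n)
    (S : Set (ℝ × EuclideanSpace ℝ (Fin n))) (hS : IsClosed S)
    (u : ℝ × EuclideanSpace ℝ (Fin n) → EuclideanSpace ℝ (Fin n))
    (hLip : ∀ x ∈ S, ∃ t ∈ 𝓝 x, ∃ K : NNReal, LipschitzOnWith K u (t ∩ S))
    (γ c : ℝ) (hγ : 0 ≤ γ) (hc : 0 ≤ c)
    (hbound : ∀ p ∈ S, ‖u p‖ ≤ γ * ‖p.2‖ + c) :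
    ∃ v : ℝ × EuclideanSpace ℝ (Fin n) → EuclideanSpace ℝ (Fin n),
      (∀ x ∈ S, v x = u x) ∧
      Continuous v ∧
      (∀ x ∈ Sᶜ, ∃ t ∈ 𝓝 x, ∃ K : NNReal, LipschitzOnWith K v (t ∩ Sᶜ)) ∧
      (∀ p : ℝ × EuclideanSpace ℝ (Fin n),
        ‖v p‖ ≤ 12 ^ (n + 1) * (γ * ‖p.2‖ + c + γ)) := by
  classical
  have hRHS : ∀ p : ℝ × EuclideanSpace ℝ (Fin n), (0:ℝ) ≤ 12 ^ (n + 1) * (γ * ‖p.2‖ + c + γ) := by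
    intro p
    have : (0:ℝ) ≤ γ * ‖p.2‖ := by positivity
    positivity
  rcases S.eq_empty_or_nonempty with rfl | hne
  · refine ⟨0, by simp, continuous_const, fun x _ => ⟨univ, Filter.univ_mem, 0,
      fun a _ b _ => by simp⟩, fun p => by simpa using hRHS p⟩
  by_cases hγc : γ + c = 0
  · have hγ0 : γ = 0 := by linarith
    have hc0 : c = 0 := by linarith
    refine ⟨0, fun x hx => ?_, continuous_const, fun x _ => ⟨univ, Filter.univ_mem, 0,
      fun a _ b _ => by simp⟩, fun p => by simpa using hRHS p⟩
    have := hbound x hx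
    rw [hγ0, hc0] at this
    simp only [zero_mul, add_zero, zero_add] at this
    exact ((norm_le_zero_iff).1 this).symm ▸ rfl
  have hcγ : 0 < c + γ := by
    rcases (lt_of_le_of_ne (by positivity) (Ne.symm hγc) : 0 < γ + c) with h
    linarith
  set m : ℝ × EuclideanSpace ℝ (Fin n) → ℝ := fun p => γ * ‖p.2‖ + c + γ with hm_def
  have hm : ∀ p, 0 < m p := by
    intro p
    have : (0:ℝ) ≤ γ * ‖p.2‖ := by positivity
    simp only [m]
    linarith
  have hmc : Continuous m := by
    apply Continuous.add
    apply Continuous.add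
    · exact continuous_const.mul (continuous_snd.norm)
    · exact continuous_const
    · exact continuous_const
  have hu : ContinuousOn u S := by
    intro x hx
    obtain ⟨t, ht, K, hK⟩ := hLip x hx
    have h1 : ContinuousWithinAt u (t ∩ S) x :=
      (hK.continuousOn) x ⟨mem_of_mem_nhds ht, hx⟩
    exact h1.mono_of_mem_nhdsWithin (Filter.inter_mem (mem_nhdsWithin_of_mem_nhds ht) self_mem_nhdsWithin)
  have hF : ContinuousOn (fun p => (m p)⁻¹ • u p) S :=
    ((hmc.continuousOn).inv₀ fun p _ => (hm p).ne').smul hu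
  let f : C(↥S, EuclideanSpace ℝ (Fin n)) := ⟨S.restrict (fun p => (m p)⁻¹ • u p), hF.restrict⟩
  have hmem : ∀ x : ↥S, f x ∈ closedBall (0:EuclideanSpace ℝ (Fin n)) 1 := by
    intro x
    rw [mem_closedBall, dist_zero_right]
    show ‖(m ↑x)⁻¹ • u ↑x‖ ≤ 1
    rw [norm_smul, Real.norm_eq_abs, abs_inv, abs_of_pos (hm _)]
    rw [inv_mul_le_iff₀ (hm _), mul_one]
    have := hbound ↑x x.2
    have h0 : (0:ℝ) ≤ γ := hγ
    simp only [m]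
    linarith
  haveI : TietzeExtension (closedBall (0:EuclideanSpace ℝ (Fin n)) 1) :=
    Set.instTietzeExtensionUnitClosedBall (𝕜 := ℝ) (E := EuclideanSpace ℝ (Fin n))
  obtain ⟨g, hgmem, hgr⟩ := ContinuousMap.exists_forall_mem_restrict_eq hS f hmem
  have hgb : ∀ x : ℝ × EuclideanSpace ℝ (Fin n), ‖g x‖ ≤ 1 := by
    intro x
    have := hgmem x
    rwa [mem_closedBall, dist_zero_right] at this
  obtain ⟨w, hwS, hwc, hwd, hwb⟩ := aux_ext hS hne (⇑g) g.continuous hgb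
  refine ⟨fun p => m p • w p, ?_, hmc.smul hwc, ?_, ?_⟩
  · intro x hx
    have h1 : w x = g x := hwS x hx
    have h2 : g x = (m x)⁻¹ • u x := DFunLike.congr_fun hgr (⟨x, hx⟩ : ↥S)
    show m x • w x = u x
    rw [h1, h2, smul_smul, mul_inv_cancel₀ (hm x).ne', one_smul]
  · intro x hx
    have hxS : x ∉ S := hx
    obtain ⟨K, t₀, ht₀, hlip⟩ := (hwd x hxS).exists_lipschitzOnWith
    set s : Set (ℝ × EuclideanSpace ℝ (Fin n)) := t₀ ∩ ball x 1 with hs_def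
    have hmlip : LipschitzOnWith γ.toNNReal m s := by
      apply LipschitzOnWith.of_dist_le_mul
      intro p _ q _
      rw [Real.dist_eq]
      have h1 : m p - m q = γ * (‖p.2‖ - ‖q.2‖) := by simp only [m]; ring
      rw [h1, abs_mul, abs_of_nonneg hγ]
      have h2 : |‖p.2‖ - ‖q.2‖| ≤ ‖p.2 - q.2‖ := abs_norm_sub_norm_le _ _
      have h3 : ‖p.2 - q.2‖ ≤ dist p q := by
        rw [dist_eq_norm]
        simpa using norm_snd_le (p - q)
      rw [Real.coe_toNNReal _ hγ]
      have := hγ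
      nlinarith [dist_nonneg (x := p) (y := q)]
    have hA : ∀ y ∈ s, |m y| ≤ γ * (‖x.2‖ + 1) + c + γ := by
      intro y hy
      rw [abs_of_pos (hm y)]
      have h4 : dist y.2 x.2 ≤ dist y x := by
        rw [dist_eq_norm, dist_eq_norm]
        simpa using norm_snd_le (y - x)
      have h5 : dist y x < 1 := by
        have := hy.2
        rwa [mem_ball] at this
      have h6 : ‖y.2‖ ≤ ‖x.2‖ + 1 := by
        have := norm_sub_norm_le y.2 x.2
        rw [← dist_eq_norm] at this
        linarith
      simp only [m]
      nlinarith
    have hB : ∀ y ∈ s, ‖w y‖ ≤ 1 := fun y _ => hwb y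
    obtain ⟨K', hK'⟩ := aux_smul_lip (by positivity) one_pos.le hmlip (hlip.mono inter_subset_left)
      hA hB
    exact ⟨s, Filter.inter_mem ht₀ (ball_mem_nhds _ one_pos), K', hK'.mono inter_subset_left⟩
  · intro p
    have h1 : ‖m p • w p‖ = |m p| * ‖w p‖ := by rw [norm_smul, Real.norm_eq_abs]
    rw [h1, abs_of_pos (hm p)]
    have h2 : m p * ‖w p‖ ≤ m p * 1 := by
      exact mul_le_mul_of_nonneg_left (hwb p) (hm p).le
    have h3 : (1:ℝ) ≤ 12 ^ (n + 1) := one_le_pow₀ (by norm_num : (1:ℝ) ≤ 12)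
    have h4 : m p ≤ 12 ^ (n + 1) * m p := le_mul_of_one_le_left (hm p).le h3
    simp only [m] at h2 h4 ⊢
    linarith
end

section
/- Let t₀ ∈ ℝ, θ' ≥ 0, and k, ω ∈ (0,∞). Let γ̄ : [t₀,∞) → [0,∞) be Lebesgue integrable with ∫_{t₀}^{∞} γ̄(s) ds = Γ < ∞, and define φ̄ : [t₀,∞) → [0,∞) by φ̄(t) = θ'·e^{−kω(t−t₀)} + ∫_{t₀}^{t} γ̄(s)·e^{−kω(t−s)} ds. Then: (i) ∫_{t₀}^{t} φ̄(s) ds ≤ (Γ + θ')/(kω) for every t ∈ [t₀,∞), and (ii) φ̄(t) → 0 as t → ∞. -/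
open MeasureTheory Filter Set intervalIntegral

lemma exp_antideriv_aux (c d : ℝ) (hc : c ≠ 0) (a b : ℝ) :
    ∫ u in a..b, Real.exp (-c * (u - d)) =
      (Real.exp (-c * (a - d)) - Real.exp (-c * (b - d))) / c := by
  have h : ∀ u : ℝ, HasDerivAt (fun u => -Real.exp (-c * (u - d)) / c)
      (Real.exp (-c * (u - d))) u := by
    intro u
    have h1 : HasDerivAt (fun u : ℝ => -c * (u - d)) (-c) u := by
      simpa using ((hasDerivAt_id u).sub_const d).const_mul (-c)
    have h3 := (h1.exp.neg).div_const c
    convert h3 using 1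
    · rfl
    · rfl
    · rfl
    · rw [mul_neg, neg_neg, mul_div_assoc, div_self hc, mul_one]
  rw [intervalIntegral.integral_eq_sub_of_hasDerivAt (fun u _ => h u)
    (((Real.continuous_exp.comp (by fun_prop)).continuousOn :
      ContinuousOn (fun u : ℝ => Real.exp (-c * (u - d))) _).intervalIntegrable)]
  ring

lemma conv_fubini_aux (t₀ t c Γ : ℝ) (hc : 0 < c) (ht : t₀ ≤ t)
    (γ : ℝ → ℝ) (hγnn : ∀ s, t₀ ≤ s → 0 ≤ γ s)
    (hγint : IntegrableOn γ (Set.Ici t₀))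
    (hGamle : ∀ b, t₀ ≤ b → (∫ s in t₀..b, γ s) ≤ Γ) :
    (∫ u in t₀..t, ∫ s in t₀..u, γ s * Real.exp (-c * (u - s))) ≤ Γ / c := by
  set μ := volume.restrict (Set.Ioc t₀ t) with hμ
  set f : ℝ → ℝ → ℝ := fun u s => if s ≤ u then γ s * Real.exp (-c * (u - s)) else 0 with hf
  have hsub : Set.Ioc t₀ t ⊆ Set.Ici t₀ := fun x hx => hx.1.le
  have hγμ : Integrable γ μ := hγint.mono_set hsub
  -- kernel integrability wrt μ
  have hkerint : ∀ u : ℝ, Integrable (fun s => γ s * Real.exp (-c * (u - s))) μ := by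
    intro u
    rw [hμ, ← IntegrableOn]
    exact (hγint.mono_set hsub).mul_continuousOn_of_subset
      ((by fun_prop : Continuous fun s : ℝ => Real.exp (-c * (u - s))).continuousOn)
      measurableSet_Ioc isCompact_Icc Set.Ioc_subset_Icc_self
  -- measurability of uncurry f
  have hγm : AEMeasurable γ μ :=
    hγint.1.aemeasurable.mono_measure (Measure.restrict_mono hsub le_rfl)
  have hgm : AEStronglyMeasurable (fun p : ℝ × ℝ => γ p.2 * Real.exp (-c * (p.1 - p.2)))
      (μ.prod μ) :=
    (AEMeasurable.mul (f := fun p : ℝ × ℝ => γ p.2) (hγm.comp_snd (μ := μ)) ((measurable_fst.sub measurable_snd).const_mul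
      (-c)).exp.aemeasurable).aestronglyMeasurable
  have hsm : MeasurableSet {p : ℝ × ℝ | p.2 ≤ p.1} :=
    measurableSet_le measurable_snd measurable_fst
  have huncurry : Function.uncurry f = Set.indicator {p : ℝ × ℝ | p.2 ≤ p.1}
      (fun p => γ p.2 * Real.exp (-c * (p.1 - p.2))) := by
    ext p
    by_cases h : p.2 ≤ p.1 <;> simp [hf, Function.uncurry, h, Set.indicator_apply]
  have hfm : AEStronglyMeasurable (Function.uncurry f) (μ.prod μ) := by
    rw [huncurry]; exact hgm.indicator hsm
  have hbound : ∀ u : ℝ, ∀ᵐ s ∂μ, ‖f u s‖ ≤ γ s := by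
    intro u
    rw [hμ]
    filter_upwards [ae_restrict_mem measurableSet_Ioc] with s hs
    by_cases h : s ≤ u
    · simp only [hf, if_pos h]
      rw [Real.norm_eq_abs, abs_of_nonneg (mul_nonneg (hγnn s hs.1.le) (Real.exp_nonneg _))]
      calc γ s * Real.exp (-c * (u - s)) ≤ γ s * 1 := by
            apply mul_le_mul_of_nonneg_left _ (hγnn s hs.1.le)
            rw [← Real.exp_zero]
            apply Real.exp_le_exp.2
            nlinarith
        _ = γ s := mul_one _
    · simp [hf, if_neg h, hγnn s hs.1.le]
  have hfcol : ∀ u : ℝ, (fun s => f u s) =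
      Set.indicator (Set.Iic u) fun s => γ s * Real.exp (-c * (u - s)) := by
    intro u; ext s
    by_cases h : s ≤ u <;> simp [hf, h, Set.indicator_apply]
  have hfint : Integrable (Function.uncurry f) (μ.prod μ) := by
    rw [integrable_prod_iff hfm]
    constructor
    · refine Eventually.of_forall fun u => ?_
      have : (fun s => Function.uncurry f (u, s)) = fun s => f u s := rfl
      rw [this, hfcol u]
      exact (hkerint u).indicator measurableSet_Iic
    · apply Integrable.mono' (integrable_const (∫ s, γ s ∂μ))
        hfm.norm.integral_prod_right'
      refine Eventually.of_forall fun u => ?_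
      rw [Real.norm_eq_abs, abs_of_nonneg (integral_nonneg fun s => norm_nonneg _)]
      exact integral_mono_of_nonneg (Eventually.of_forall fun s => norm_nonneg _) hγμ (hbound u)
  -- swap
  have hswap := integral_integral_swap hfint
  -- LHS identification
  have hLHS : (∫ u in t₀..t, ∫ s in t₀..u, γ s * Real.exp (-c * (u - s)))
      = ∫ u, (∫ s, f u s ∂μ) ∂μ := by
    rw [intervalIntegral.integral_of_le ht]
    apply setIntegral_congr_fun measurableSet_Ioc
    intro u hu
    show (∫ s in t₀..u, γ s * Real.exp (-c * (u - s))) = ∫ s, f u s ∂μ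
    rw [hfcol u, setIntegral_indicator measurableSet_Iic,
      intervalIntegral.integral_of_le hu.1.le]
    congr 1
    rw [Set.Ioc_inter_Iic, min_eq_right hu.2]
  rw [hLHS, hswap]
  have hinner : ∀ s ∈ Set.Ioc t₀ t, (∫ u, f u s ∂μ) ≤ γ s / c := by
    intro s hs
    have hrow : (fun u => f u s) =
        Set.indicator (Set.Ici s) fun u => γ s * Real.exp (-c * (u - s)) := by
      ext u; by_cases h : s ≤ u <;> simp [hf, h, Set.indicator_apply]
    rw [hμ, hrow, setIntegral_indicator measurableSet_Ici]
    have hset : Set.Ioc t₀ t ∩ Set.Ici s = Set.Icc s t := by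
      ext u
      simp only [Set.mem_inter_iff, Set.mem_Ioc, Set.mem_Ici, Set.mem_Icc]
      constructor
      · rintro ⟨⟨_, h2⟩, h3⟩; exact ⟨h3, h2⟩
      · rintro ⟨h1, h2⟩; exact ⟨⟨lt_of_lt_of_le hs.1 h1, h2⟩, h1⟩
    rw [hset, MeasureTheory.integral_Icc_eq_integral_Ioc, ← intervalIntegral.integral_of_le hs.2,
      intervalIntegral.integral_const_mul, exp_antideriv_aux c s (ne_of_gt hc)]
    have h1 : Real.exp (-c * (s - s)) = 1 := by simp
    rw [h1]
    calc γ s * ((1 - Real.exp (-c * (t - s))) / c) ≤ γ s * (1 / c) := by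
          apply mul_le_mul_of_nonneg_left _ (hγnn s hs.1.le)
          gcongr
          linarith [Real.exp_nonneg (-c * (t - s))]
      _ = γ s / c := by ring
  have hint2 : Integrable (fun s => ∫ u, f u s ∂μ) μ := by
    have := hfint.integral_prod_right
    simpa [Function.uncurry] using this
  have hmono : (∫ s, (∫ u, f u s ∂μ) ∂μ) ≤ ∫ s, γ s / c ∂μ := by
    refine MeasureTheory.integral_mono_ae hint2 (hγμ.div_const c) ?_
    rw [hμ]
    filter_upwards [ae_restrict_mem measurableSet_Ioc] with s hs using hinner s hs
  refine hmono.trans ?_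
  rw [MeasureTheory.integral_div]
  have : (∫ s, γ s ∂μ) ≤ Γ := by
    rw [hμ, ← intervalIntegral.integral_of_le ht]
    exact hGamle t ht
  exact (div_le_div_iff_of_pos_right hc).2 this

/-- For integrable `γ̄ ≥ 0` on `[t₀,∞)` with total integral `Γ` and
`φ̄(t) = θ'·e^{-kω(t-t₀)} + ∫_{t₀}^t γ̄(s)e^{-kω(t-s)} ds`, one has
`∫_{t₀}^t φ̄ ≤ (Γ + θ')/(kω)` for all `t ≥ t₀`, and `φ̄(t) → 0` as `t → ∞`. -/
theorem integral_bound_and_tendsto_zero_of_convolution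
    (t₀ θ' k ω : ℝ) (hθ : 0 ≤ θ') (hk : 0 < k) (hω : 0 < ω)
    (γ : ℝ → ℝ) (hγnn : ∀ t, t₀ ≤ t → 0 ≤ γ t)
    (hγint : IntegrableOn γ (Set.Ici t₀))
    (Γ : ℝ) (hΓ : (∫ s in Set.Ici t₀, γ s) = Γ)
    (φ : ℝ → ℝ)
    (hφ : ∀ t, t₀ ≤ t →
      φ t = θ' * Real.exp (-(k * ω) * (t - t₀))
        + ∫ s in t₀..t, γ s * Real.exp (-(k * ω) * (t - s))) :
    (∀ t, t₀ ≤ t → (∫ s in t₀..t, φ s) ≤ (Γ + θ') / (k * ω)) ∧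
    Tendsto φ atTop (nhds 0) := by
  set c := k * ω with hcdef
  have hc : 0 < c := mul_pos hk hω
  -- basic integrability facts
  have hγii : ∀ a b, t₀ ≤ a → a ≤ b → IntervalIntegrable γ volume a b := by
    intro a b ha hab
    apply (hγint.mono_set ?_).intervalIntegrable
    rw [Set.uIcc_of_le hab]
    exact fun x hx => le_trans ha hx.1
  have hker : ∀ u a b, t₀ ≤ a → a ≤ b →
      IntervalIntegrable (fun s => γ s * Real.exp (-c * (u - s))) volume a b := by
    intro u a b ha hab
    exact (hγii a b ha hab).mul_continuousOn
      ((by fun_prop : Continuous fun s : ℝ => Real.exp (-c * (u - s))).continuousOn)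
  set I : ℝ → ℝ := fun u => ∫ s in t₀..u, γ s * Real.exp (-c * (u - s)) with hI
  have hInonneg : ∀ u, t₀ ≤ u → 0 ≤ I u := by
    intro u hu
    apply intervalIntegral.integral_nonneg hu
    intro s hs
    exact mul_nonneg (hγnn s hs.1) (Real.exp_nonneg _)
  have hGamle : ∀ b, t₀ ≤ b → (∫ s in t₀..b, γ s) ≤ Γ := by
    intro b hb
    rw [← hΓ, intervalIntegral.integral_of_le hb]
    apply setIntegral_mono_set hγint
    · exact (ae_restrict_iff' measurableSet_Ici).2 (Eventually.of_forall hγnn)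
    · exact HasSubset.Subset.eventuallyLE fun x hx => hx.1.le
  have hGam0 : 0 ≤ Γ := by
    rw [← hΓ]; exact setIntegral_nonneg measurableSet_Ici hγnn
  constructor
  · -- Part (i)
    intro t ht
    have hφcong : (∫ s in t₀..t, φ s)
        = ∫ u in t₀..t, (θ' * Real.exp (-c * (u - t₀)) + I u) := by
      apply intervalIntegral.integral_congr
      intro u hu
      rw [Set.uIcc_of_le ht] at hu
      exact hφ u hu.1
    -- continuity of I on [t₀, t]
    have hIeq : ∀ u, I u = Real.exp (-(c * u)) * ∫ s in t₀..u, γ s * Real.exp (c * s) := by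
      intro u
      rw [← intervalIntegral.integral_const_mul]
      apply intervalIntegral.integral_congr
      intro s _
      show γ s * Real.exp (-c * (u - s)) = Real.exp (-(c * u)) * (γ s * Real.exp (c * s))
      rw [show -c * (u - s) = -(c * u) + c * s by ring, Real.exp_add]
      ring
    have hFcont : ContinuousOn (fun u => ∫ s in t₀..u, γ s * Real.exp (c * s)) (Set.uIcc t₀ t) := by
      apply intervalIntegral.continuousOn_primitive_interval
      rw [Set.uIcc_of_le ht]
      exact (hγint.mono_set Set.Icc_subset_Ici_self).mul_continuousOn
        ((by fun_prop : Continuous fun s : ℝ => Real.exp (c * s)).continuousOn) isCompact_Icc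
    have hIcont : ContinuousOn I (Set.uIcc t₀ t) := by
      have hcm : ContinuousOn
          (fun u => Real.exp (-(c * u)) * ∫ s in t₀..u, γ s * Real.exp (c * s))
          (Set.uIcc t₀ t) :=
        ((by fun_prop : Continuous fun u : ℝ => Real.exp (-(c * u))).continuousOn).mul hFcont
      exact hcm.congr fun u _ => hIeq u
    have hA : IntervalIntegrable (fun u => θ' * Real.exp (-c * (u - t₀))) volume t₀ t :=
      (by fun_prop : Continuous fun u : ℝ => θ' * Real.exp (-c * (u - t₀))).intervalIntegrable _ _
    have hB : IntervalIntegrable I volume t₀ t := hIcont.intervalIntegrable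
    rw [hφcong, intervalIntegral.integral_add hA hB]
    have hterm1 : (∫ u in t₀..t, θ' * Real.exp (-c * (u - t₀))) ≤ θ' / c := by
      rw [intervalIntegral.integral_const_mul, exp_antideriv_aux c t₀ (ne_of_gt hc)]
      have h0 : Real.exp (-c * (t₀ - t₀)) = 1 := by simp
      rw [h0]
      calc θ' * ((1 - Real.exp (-c * (t - t₀))) / c) ≤ θ' * (1 / c) := by
            apply mul_le_mul_of_nonneg_left _ hθ
            gcongr
            linarith [Real.exp_nonneg (-c * (t - t₀))]
        _ = θ' / c := by ring
    have hterm2 : (∫ u in t₀..t, I u) ≤ Γ / c :=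
      conv_fubini_aux t₀ t c Γ hc ht γ hγnn hγint hGamle
    calc (∫ u in t₀..t, θ' * Real.exp (-c * (u - t₀))) + ∫ u in t₀..t, I u
        ≤ θ' / c + Γ / c := add_le_add hterm1 hterm2
      _ = (Γ + θ') / c := by ring
  · -- Part (ii)
    have hexpgen : ∀ d : ℝ, Tendsto (fun t => Real.exp (-c * (t - d))) atTop (nhds 0) := by
      intro d
      have hlin : Tendsto (fun t : ℝ => c * (t - d)) atTop atTop := by
        apply Tendsto.const_mul_atTop hc
        simpa [sub_eq_add_neg] using tendsto_atTop_add_const_right atTop (-d) tendsto_id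
      have hcomp := Real.tendsto_exp_neg_atTop_nhds_zero.comp hlin
      have heq : (fun t : ℝ => Real.exp (-c * (t - d))) =
          (fun x => Real.exp (-x)) ∘ fun t : ℝ => c * (t - d) := by
        funext t; simp [Function.comp, neg_mul]
      rw [heq]; exact hcomp
    have h1 : Tendsto (fun t => θ' * Real.exp (-c * (t - t₀))) atTop (nhds 0) := by
      simpa using (hexpgen t₀).const_mul θ'
    have h2 : Tendsto I atTop (nhds 0) := by
      rw [Metric.tendsto_atTop]
      intro ε hε
      have htail : Tendsto (fun T => ∫ s in t₀..T, γ s) atTop (nhds Γ) := by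
        have h := MeasureTheory.intervalIntegral_tendsto_integral_Ioi t₀
          (hγint.mono_set Set.Ioi_subset_Ici_self) tendsto_id
        rwa [← MeasureTheory.integral_Ici_eq_integral_Ioi, hΓ] at h
      obtain ⟨T, hTt₀, hT⟩ : ∃ T, t₀ ≤ T ∧ Γ - (∫ s in t₀..T, γ s) < ε / 2 := by
        have h := htail.eventually (eventually_gt_nhds (show Γ - ε / 2 < Γ by linarith))
        obtain ⟨T, hT1, hT2⟩ := (h.and (eventually_ge_atTop t₀)).exists
        exact ⟨T, hT2, by linarith⟩
      have hexp0 : Tendsto (fun t => Real.exp (-c * (t - T)) * Γ) atTop (nhds 0) := by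
        simpa using (hexpgen T).mul_const Γ
      have hev := (hexp0.eventually_lt_const (show (0:ℝ) < ε / 2 by linarith)).and
        (eventually_ge_atTop T)
      obtain ⟨N, hN⟩ := eventually_atTop.1 hev
      refine ⟨N, fun t htN => ?_⟩
      obtain ⟨hexpt, hTt⟩ := hN t htN
      have ht₀t : t₀ ≤ t := le_trans hTt₀ hTt
      rw [Real.dist_eq, sub_zero, abs_of_nonneg (hInonneg t ht₀t)]
      have hsplit : I t = (∫ s in t₀..T, γ s * Real.exp (-c * (t - s)))
          + ∫ s in T..t, γ s * Real.exp (-c * (t - s)) :=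
        (intervalIntegral.integral_add_adjacent_intervals (hker t t₀ T le_rfl hTt₀)
          (hker t T t hTt₀ hTt)).symm
      have hp1 : (∫ s in t₀..T, γ s * Real.exp (-c * (t - s)))
          ≤ Real.exp (-c * (t - T)) * Γ := by
        calc (∫ s in t₀..T, γ s * Real.exp (-c * (t - s)))
            ≤ ∫ s in t₀..T, γ s * Real.exp (-c * (t - T)) := by
              apply intervalIntegral.integral_mono_on hTt₀ (hker t t₀ T le_rfl hTt₀)
                ((hγii t₀ T le_rfl hTt₀).mul_const _)
              intro s hs
              apply mul_le_mul_of_nonneg_left _ (hγnn s hs.1)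
              apply Real.exp_le_exp.2
              nlinarith [hs.2]
          _ = (∫ s in t₀..T, γ s) * Real.exp (-c * (t - T)) :=
              intervalIntegral.integral_mul_const _ _
          _ ≤ Γ * Real.exp (-c * (t - T)) :=
              mul_le_mul_of_nonneg_right (hGamle T hTt₀) (Real.exp_nonneg _)
          _ = Real.exp (-c * (t - T)) * Γ := mul_comm _ _
      have hp2 : (∫ s in T..t, γ s * Real.exp (-c * (t - s))) ≤ Γ - ∫ s in t₀..T, γ s := by
        calc (∫ s in T..t, γ s * Real.exp (-c * (t - s))) ≤ ∫ s in T..t, γ s := by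
              apply intervalIntegral.integral_mono_on hTt (hker t T t hTt₀ hTt)
                (hγii T t hTt₀ hTt)
              intro s hs
              have hs0 : t₀ ≤ s := le_trans hTt₀ hs.1
              calc γ s * Real.exp (-c * (t - s)) ≤ γ s * 1 := by
                    apply mul_le_mul_of_nonneg_left _ (hγnn s hs0)
                    rw [← Real.exp_zero]
                    apply Real.exp_le_exp.2
                    nlinarith [hs.2]
                _ = γ s := mul_one _
          _ = (∫ s in t₀..t, γ s) - ∫ s in t₀..T, γ s := by
              rw [← intervalIntegral.integral_add_adjacent_intervals
                (hγii t₀ T le_rfl hTt₀) (hγii T t hTt₀ hTt)]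
              ring
          _ ≤ Γ - ∫ s in t₀..T, γ s := by linarith [hGamle t ht₀t]
      rw [hsplit]
      linarith
    have hsum : Tendsto (fun t => θ' * Real.exp (-c * (t - t₀)) + I t) atTop (nhds 0) := by
      simpa using h1.add h2
    apply Tendsto.congr' _ hsum
    filter_upwards [eventually_ge_atTop t₀] with t ht
    exact (hφ t ht).symm
end

section
/- Let m ≥ 1, let C, L ∈ ℝ^{m×m}, set A = C·Cᵀ·L, and let ω ∈ ℝ. If the symmetric matrix A + Aᵀ − 2ω·I_m is positive semidefinite, then ω ≤ σ_min(C)²·‖L‖. Equivalently, the smallest eigenvalue of A + Aᵀ is at most 2·σ_min(C)²·‖L‖. -/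
open Matrix

/-- The singular values of a real matrix `A`: the square roots of the eigenvalues of
`Aᵀ·A` (indexed by the column type). -/
noncomputable def singVals {ι κ : Type*} [Fintype ι] [Fintype κ] [DecidableEq κ]
    (A : Matrix ι κ ℝ) : κ → ℝ :=
  fun j => Real.sqrt ((show (Aᵀ * A).IsHermitian by
    simpa [Matrix.conjTranspose_eq_transpose_of_trivial] using
      Matrix.isHermitian_conjTranspose_mul_self A).eigenvalues j)

private lemma Matrix.isHermitian_transpose_mul_self {ι κ : Type*} [Fintype ι]
    (A : Matrix ι κ ℝ) : (Aᵀ * A).IsHermitian := by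
  simpa [Matrix.conjTranspose_eq_transpose_of_trivial] using
    Matrix.isHermitian_conjTranspose_mul_self A

/-- The largest singular value (spectral norm). -/
noncomputable def sigmaMax {ι κ : Type*} [Fintype ι] [Fintype κ] [DecidableEq κ]
    (A : Matrix ι κ ℝ) : ℝ := ⨆ j, singVals A j

/-- The smallest singular value. -/
noncomputable def sigmaMin {ι κ : Type*} [Fintype ι] [Fintype κ] [DecidableEq κ]
    (A : Matrix ι κ ℝ) : ℝ := ⨅ j, singVals A j

private lemma rayleigh_upper {m : ℕ} {N : Matrix (Fin m) (Fin m) ℝ} (hN : N.IsHermitian)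
    {c : ℝ} (hc : ∀ i, hN.eigenvalues i ≤ c) (v : Fin m → ℝ) :
    v ⬝ᵥ (N *ᵥ v) ≤ c * (v ⬝ᵥ v) := by
  have hU := (Matrix.mem_unitaryGroup_iff).mp (hN.eigenvectorUnitary).2
  have key : c • (1 : Matrix (Fin m) (Fin m) ℝ) - N
      = (hN.eigenvectorUnitary : Matrix (Fin m) (Fin m) ℝ)
        * Matrix.diagonal (fun i => c - hN.eigenvalues i)
        * (star (hN.eigenvectorUnitary : Matrix (Fin m) (Fin m) ℝ)) := by
    have hdiag : Matrix.diagonal (fun i => c - hN.eigenvalues i)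
        = c • (1 : Matrix (Fin m) (Fin m) ℝ)
          - Matrix.diagonal (RCLike.ofReal ∘ hN.eigenvalues) := by
      ext i j
      by_cases hij : i = j <;>
        simp [Matrix.diagonal_apply, Matrix.one_apply, hij, Function.comp]
    rw [hdiag, Matrix.mul_sub, Matrix.sub_mul, Matrix.mul_smul, Matrix.smul_mul, mul_one, hU,
      ← Unitary.conjStarAlgAut_apply (S := ℝ), ← hN.spectral_theorem]
  have hpsd : (c • (1 : Matrix (Fin m) (Fin m) ℝ) - N).PosSemidef := by
    rw [key]
    exact (Matrix.posSemidef_diagonal_iff.mpr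
      (fun i => sub_nonneg.mpr (hc i))).mul_mul_conjTranspose_same _
  have := hpsd.dotProduct_mulVec_nonneg v
  simp only [star_trivial, Matrix.sub_mulVec, dotProduct_sub,
    Matrix.smul_mulVec, Matrix.one_mulVec, dotProduct_smul, smul_eq_mul] at this
  linarith

/-- If `A = C·Cᵀ·L` and `A + Aᵀ - 2ω·I` is positive semidefinite, then
`ω ≤ σ_min(C)²·‖L‖`, where `‖L‖` is the spectral norm. -/
theorem omega_le_sigmaMin_sq_mul_norm
    (m : ℕ) (hm : 1 ≤ m) (C L : Matrix (Fin m) (Fin m) ℝ) (ω : ℝ)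
    (h : (C * Cᵀ * L + (C * Cᵀ * L)ᵀ - (2 * ω) • (1 : Matrix (Fin m) (Fin m) ℝ)).PosSemidef) :
    ω ≤ sigmaMin C ^ 2 * sigmaMax L := by
  haveI : Nonempty (Fin m) := ⟨⟨0, hm⟩⟩
  have hCT : Cᴴ = Cᵀ := Matrix.conjTranspose_eq_transpose_of_trivial C
  -- sigmaMax facts
  have hLev : ∀ i, (Matrix.isHermitian_transpose_mul_self L).eigenvalues i ≤ (sigmaMax L) ^ 2 := by
    intro i
    have h1 : singVals L i ≤ sigmaMax L :=
      le_ciSup (Set.Finite.bddAbove (Set.finite_range _)) i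
    have h0 : 0 ≤ (Matrix.isHermitian_transpose_mul_self L).eigenvalues i :=
      (Matrix.posSemidef_conjTranspose_mul_self L).eigenvalues_nonneg i
    calc (Matrix.isHermitian_transpose_mul_self L).eigenvalues i
        = (singVals L i) ^ 2 := by rw [singVals, Real.sq_sqrt h0]
      _ ≤ (sigmaMax L) ^ 2 := pow_le_pow_left₀ (Real.sqrt_nonneg _) h1 2
  have hsmax : 0 ≤ sigmaMax L := by
    have h1 : singVals L (Classical.arbitrary (Fin m)) ≤ sigmaMax L :=
      le_ciSup (Set.Finite.bddAbove (Set.finite_range _)) (Classical.arbitrary (Fin m))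
    exact le_trans (Real.sqrt_nonneg _) h1
  -- minimal eigenvalue of CᴴC
  obtain ⟨j, hj⟩ := exists_eq_ciInf_of_finite (f := singVals C)
  set lam := (Matrix.isHermitian_transpose_mul_self C).eigenvalues j with hlamdef
  have hlam0 : 0 ≤ lam := (Matrix.posSemidef_conjTranspose_mul_self C).eigenvalues_nonneg j
  have hlam : sigmaMin C ^ 2 = lam := by
    rw [sigmaMin, ← hj, singVals, Real.sq_sqrt hlam0]
  -- eigenvector of CᴴC
  set u : Fin m → ℝ := ⇑((Matrix.isHermitian_transpose_mul_self C).eigenvectorBasis j) with hudef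
  have hu : (Cᴴ * C) *ᵥ u = lam • u :=
    Matrix.IsHermitian.mulVec_eigenvectorBasis _ j
  have hu0 : u ≠ 0 := by
    intro h0
    have h1 : ‖(Matrix.isHermitian_transpose_mul_self C).eigenvectorBasis j‖ = 1 :=
      ((Matrix.isHermitian_transpose_mul_self C).eigenvectorBasis).orthonormal.1 j
    have h2 : (Matrix.isHermitian_transpose_mul_self C).eigenvectorBasis j = 0 := by
      apply PiLp.ext
      intro i
      exact congrFun h0 i
    rw [h2] at h1
    simp at h1
  -- eigenvector of C·Cᵀ with the same eigenvalue
  obtain ⟨v, hv0, hv⟩ : ∃ v : Fin m → ℝ, v ≠ 0 ∧ (C * Cᵀ) *ᵥ v = lam • v := by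
    by_cases hCu : C *ᵥ u = 0
    · have h1 : (Cᴴ * C) *ᵥ u = 0 := by
        rw [← Matrix.mulVec_mulVec, hCu, Matrix.mulVec_zero]
      have hlamz : lam = 0 := by
        rw [hu] at h1
        rcases smul_eq_zero.mp h1 with h' | h'
        · exact h'
        · exact absurd h' hu0
      have hdet : C.det = 0 := (Matrix.exists_mulVec_eq_zero_iff).mp ⟨u, hu0, hCu⟩
      have hdetT : Cᵀ.det = 0 := by rw [Matrix.det_transpose]; exact hdet
      obtain ⟨w, hw0, hw⟩ := (Matrix.exists_mulVec_eq_zero_iff).mpr hdetT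
      exact ⟨w, hw0, by
        rw [← Matrix.mulVec_mulVec, hw, Matrix.mulVec_zero, hlamz, zero_smul]⟩
    · refine ⟨C *ᵥ u, hCu, ?_⟩
      calc (C * Cᵀ) *ᵥ (C *ᵥ u) = (C * Cᵀ * C) *ᵥ u := by rw [Matrix.mulVec_mulVec]
        _ = C *ᵥ ((Cᴴ * C) *ᵥ u) := by
            rw [Matrix.mulVec_mulVec, hCT, ← Matrix.mul_assoc]
        _ = lam • (C *ᵥ u) := by rw [hu, Matrix.mulVec_smul]
  -- quadratic form facts
  have hvv : 0 < v ⬝ᵥ v := by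
    have h0 : 0 ≤ v ⬝ᵥ v := Finset.sum_nonneg fun i _ => mul_self_nonneg _
    rcases h0.lt_or_eq with h' | h'
    · exact h'
    · exact absurd (dotProduct_self_eq_zero.mp h'.symm) hv0
  have hsym : v ⬝ᵥ ((C * Cᵀ * L)ᵀ *ᵥ v) = v ⬝ᵥ ((C * Cᵀ * L) *ᵥ v) := by
    rw [Matrix.dotProduct_mulVec, Matrix.vecMul_transpose, dotProduct_comm]
  have hAv : v ⬝ᵥ ((C * Cᵀ * L) *ᵥ v) = lam * (v ⬝ᵥ (L *ᵥ v)) := by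
    have hMsym : (C * Cᵀ)ᵀ = C * Cᵀ := by
      rw [Matrix.transpose_mul, Matrix.transpose_transpose]
    have h1 : v ᵥ* (C * Cᵀ) = lam • v := by
      rw [← hMsym, Matrix.vecMul_transpose, hv]
    rw [← Matrix.mulVec_mulVec, Matrix.dotProduct_mulVec, h1, smul_dotProduct,
      smul_eq_mul]
  -- bound on v ⬝ᵥ L v
  have hLL : (L *ᵥ v) ⬝ᵥ (L *ᵥ v) ≤ (sigmaMax L) ^ 2 * (v ⬝ᵥ v) := by
    have h1 := rayleigh_upper (Matrix.isHermitian_transpose_mul_self L) hLev v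
    rw [← Matrix.mulVec_mulVec, Matrix.dotProduct_mulVec] at h1
    rwa [show v ᵥ* Lᵀ = L *ᵥ v from by
      rw [Matrix.vecMul_transpose]] at h1
  have hCS : (v ⬝ᵥ (L *ᵥ v)) ^ 2 ≤ (v ⬝ᵥ v) * ((L *ᵥ v) ⬝ᵥ (L *ᵥ v)) := by
    have h1 := Finset.sum_mul_sq_le_sq_mul_sq Finset.univ v (L *ᵥ v)
    simpa only [dotProduct, sq] using h1
  have hvL : v ⬝ᵥ (L *ᵥ v) ≤ sigmaMax L * (v ⬝ᵥ v) := by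
    have h2 : (v ⬝ᵥ (L *ᵥ v)) ^ 2 ≤ (sigmaMax L * (v ⬝ᵥ v)) ^ 2 := by
      calc (v ⬝ᵥ (L *ᵥ v)) ^ 2 ≤ (v ⬝ᵥ v) * ((L *ᵥ v) ⬝ᵥ (L *ᵥ v)) := hCS
        _ ≤ (v ⬝ᵥ v) * ((sigmaMax L) ^ 2 * (v ⬝ᵥ v)) :=
            mul_le_mul_of_nonneg_left hLL hvv.le
        _ = (sigmaMax L * (v ⬝ᵥ v)) ^ 2 := by ring
    calc v ⬝ᵥ (L *ᵥ v) ≤ |v ⬝ᵥ (L *ᵥ v)| := le_abs_self _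
      _ ≤ |sigmaMax L * (v ⬝ᵥ v)| := by
          rw [← Real.sqrt_sq_eq_abs, ← Real.sqrt_sq_eq_abs]
          exact Real.sqrt_le_sqrt h2
      _ = sigmaMax L * (v ⬝ᵥ v) := abs_of_nonneg (mul_nonneg hsmax hvv.le)
  -- use PSD hypothesis
  have hq := h.dotProduct_mulVec_nonneg v
  simp only [star_trivial, Matrix.add_mulVec, Matrix.sub_mulVec, dotProduct_add,
    dotProduct_sub, Matrix.smul_mulVec, Matrix.one_mulVec,
    dotProduct_smul, smul_eq_mul] at hq
  rw [hsym, hAv] at hq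
  rw [hlam]
  nlinarith [mul_le_mul_of_nonneg_left hvL hlam0, hvv, hq]
end

section
/- Let m ≤ n, J̄ ∈ ℝ^{m×n}, w ∈ (0,∞), and let R ∈ ℝ^{n×n} be any invertible matrix with Rᵀ·R = J̄ᵀ·J̄ + w²·I_n. Set J = J̄·R⁻¹. Then J·Jᵀ = J̄·J̄ᵀ·(J̄·J̄ᵀ + w²·I_m)⁻¹, and consequently for every v ∈ ℝ^m and μ ∈ ℝ with J̄·J̄ᵀ·v = μ·v one has (J·Jᵀ)·v = (μ/(μ + w²))·v. -/
open Matrix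

lemma smul_one_posDef {k : ℕ} {c : ℝ} (hc : 0 < c) :
    (c • (1 : Matrix (Fin k) (Fin k) ℝ)).PosDef := by
  rw [Matrix.posDef_iff_dotProduct_mulVec]
  constructor
  · unfold Matrix.IsHermitian
    simp [Matrix.conjTranspose_smul]
  · intro x hx
    have : (c • (1 : Matrix (Fin k) (Fin k) ℝ)) *ᵥ x = c • x := by
      simp [Matrix.smul_mulVec]
    rw [this]
    simp only [dotProduct_smul, smul_eq_mul, RCLike.re_to_real]
    have hxx : 0 < star x ⬝ᵥ x := by
      have := Matrix.dotProduct_star_self_pos_iff (v := x)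
      simpa using (this.mpr hx)
    positivity

/-- If `Rᵀ·R = J̄ᵀ·J̄ + w²·I_n` with `R` invertible and `J = J̄·R⁻¹`, then
`J·Jᵀ = J̄·J̄ᵀ·(J̄·J̄ᵀ + w²·I_m)⁻¹`; consequently any eigenvector of `J̄·J̄ᵀ` with
eigenvalue `μ` is an eigenvector of `J·Jᵀ` with eigenvalue `μ/(μ + w²)`. -/
theorem preconditioned_gram_eq_and_eigen
    (m n : ℕ) (hmn : m ≤ n)
    (Jb : Matrix (Fin m) (Fin n) ℝ) (w : ℝ) (hw : 0 < w)
    (R : Matrix (Fin n) (Fin n) ℝ) (hR : IsUnit R.det)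
    (hchol : Rᵀ * R = Jbᵀ * Jb + (w ^ 2) • (1 : Matrix (Fin n) (Fin n) ℝ)) :
    (Jb * R⁻¹) * (Jb * R⁻¹)ᵀ
        = Jb * Jbᵀ * (Jb * Jbᵀ + (w ^ 2) • (1 : Matrix (Fin m) (Fin m) ℝ))⁻¹ ∧
    ∀ (v : Fin m → ℝ) (μ : ℝ), (Jb * Jbᵀ) *ᵥ v = μ • v →
      ((Jb * R⁻¹) * (Jb * R⁻¹)ᵀ) *ᵥ v = (μ / (μ + w ^ 2)) • v := by
  set A : Matrix (Fin m) (Fin m) ℝ := Jb * Jbᵀ with hA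
  set S : Matrix (Fin m) (Fin m) ℝ := A + (w ^ 2) • 1 with hS
  set N : Matrix (Fin n) (Fin n) ℝ := Jbᵀ * Jb + (w ^ 2) • 1 with hN
  have hApsd : A.PosSemidef := by
    have := Matrix.posSemidef_self_mul_conjTranspose Jb
    simpa [hA] using this
  have hSpd : S.PosDef := Matrix.PosDef.posSemidef_add hApsd (smul_one_posDef (by positivity))
  have hSunit : IsUnit S.det := hSpd.det_pos.ne'.isUnit
  have hNunit : IsUnit N.det := by
    rw [← hchol, Matrix.det_mul, Matrix.det_transpose]
    exact hR.mul hR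
  haveI : Invertible S := S.invertibleOfIsUnitDet hSunit
  haveI : Invertible N := N.invertibleOfIsUnitDet hNunit
  -- push-through identity
  have hpush : Jb * N = S * Jb := by
    simp [hN, hS, hA, Matrix.mul_add, Matrix.add_mul, Matrix.mul_smul, Matrix.smul_mul,
      Matrix.mul_assoc]
  have hpushinv : Jb * N⁻¹ = S⁻¹ * Jb := by
    have h1 := congrArg (fun X => S⁻¹ * X * N⁻¹) hpush
    simpa [Matrix.mul_assoc, Matrix.mul_inv_cancel_left_of_invertible,
      Matrix.inv_mul_cancel_left_of_invertible, Matrix.mul_inv_of_invertible,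
      Matrix.inv_mul_of_invertible] using h1.symm
  have hAScomm : A * S⁻¹ = S⁻¹ * A := by
    have h : A * S = S * A := by
      simp [hS, Matrix.mul_add, Matrix.add_mul, Matrix.mul_smul, Matrix.smul_mul]
    have h1 := congrArg (fun X => S⁻¹ * X * S⁻¹) h
    simpa [Matrix.mul_assoc, Matrix.mul_inv_cancel_left_of_invertible,
      Matrix.inv_mul_cancel_left_of_invertible, Matrix.mul_inv_of_invertible,
      Matrix.inv_mul_of_invertible] using h1.symm
  have hmain : (Jb * R⁻¹) * (Jb * R⁻¹)ᵀ = A * S⁻¹ := by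
    have h2 : (Jb * R⁻¹) * (Jb * R⁻¹)ᵀ = Jb * (Rᵀ * R)⁻¹ * Jbᵀ := by
      rw [Matrix.transpose_mul, Matrix.transpose_nonsing_inv, Matrix.mul_inv_rev]
      rw [Matrix.mul_assoc, Matrix.mul_assoc, Matrix.mul_assoc]
    rw [h2, hchol, hpushinv, Matrix.mul_assoc, ← hA, ← hAScomm]
  refine ⟨by rw [hmain, hAScomm], ?_⟩
  intro v μ hv
  rcases eq_or_ne v 0 with rfl | hv0
  · simp [Matrix.mulVec_zero]
  · have hμ : 0 ≤ μ := by
      have hpos : 0 < v ⬝ᵥ v := by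
        have := Matrix.dotProduct_star_self_pos_iff (v := v)
        simpa using this.mpr hv0
      have hnn : 0 ≤ v ⬝ᵥ (A *ᵥ v) := by
        have := hApsd.dotProduct_mulVec_nonneg v
        simpa using this
      rw [hv] at hnn
      simp only [dotProduct_smul, smul_eq_mul] at hnn
      nlinarith
    have hμw : μ + w ^ 2 ≠ 0 := by positivity
    have hSv : S *ᵥ v = (μ + w ^ 2) • v := by
      simp [hS, Matrix.add_mulVec, hv, Matrix.smul_mulVec, add_smul]
    have hSinv : S⁻¹ *ᵥ v = (μ + w ^ 2)⁻¹ • v := by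
      have h3 : S⁻¹ *ᵥ (S *ᵥ v) = v := by
        rw [Matrix.mulVec_mulVec, Matrix.nonsing_inv_mul _ hSunit, Matrix.one_mulVec]
      rw [hSv, Matrix.mulVec_smul] at h3
      have h4 := congrArg (fun x => (μ + w ^ 2)⁻¹ • x) h3
      simpa [smul_smul, inv_mul_cancel₀ hμw] using h4
    rw [hmain, ← Matrix.mulVec_mulVec, hSinv, Matrix.mulVec_smul, hv, smul_smul,
      mul_comm, div_eq_mul_inv, mul_comm μ]
end

section
/- Let m ≤ n, J̄ ∈ ℝ^{m×n}, w ∈ (0,∞), and let R ∈ ℝ^{n×n} be invertible with Rᵀ·R = J̄ᵀ·J̄ + w²·I_n. Suppose J̄ = C̄·Ĵ̄ and J̄·R⁻¹ = C·Ĵ, where C̄, C ∈ ℝ^{m×m} and Ĵ̄, Ĵ ∈ ℝ^{m×n} satisfy Ĵ̄·Ĵ̄ᵀ = I_m and Ĵ·Ĵᵀ = I_m. Then C·Cᵀ = C̄·(C̄ᵀ·C̄ + w²·I_m)⁻¹·C̄ᵀ. -/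
open Matrix

/-- If `Rᵀ·R = J̄ᵀ·J̄ + w²·I_n` with `R` invertible, `J̄ = C̄·Ĵ̄` and
`J̄·R⁻¹ = C·Ĵ` with `Ĵ̄·Ĵ̄ᵀ = I_m` and `Ĵ·Ĵᵀ = I_m`, then
`C·Cᵀ = C̄·(C̄ᵀ·C̄ + w²·I_m)⁻¹·C̄ᵀ`. -/
theorem preconditioned_C_gram
    (m n : ℕ) (hmn : m ≤ n)
    (Jb : Matrix (Fin m) (Fin n) ℝ) (w : ℝ) (hw : 0 < w)
    (R : Matrix (Fin n) (Fin n) ℝ) (hR : IsUnit R.det)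
    (hchol : Rᵀ * R = Jbᵀ * Jb + (w ^ 2) • (1 : Matrix (Fin n) (Fin n) ℝ))
    (Cb C : Matrix (Fin m) (Fin m) ℝ) (Jbh Jh : Matrix (Fin m) (Fin n) ℝ)
    (h1 : Jb = Cb * Jbh) (h2 : Jb * R⁻¹ = C * Jh)
    (h3 : Jbh * Jbhᵀ = 1) (h4 : Jh * Jhᵀ = 1) :
    C * Cᵀ = Cb * (Cbᵀ * Cb + (w ^ 2) • (1 : Matrix (Fin m) (Fin m) ℝ))⁻¹ * Cbᵀ := by
  -- positive-definite perturbations of Gram matrices are invertible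
  have hsm : ∀ k : ℕ, ((w ^ 2) • (1 : Matrix (Fin k) (Fin k) ℝ)).PosDef := by
    intro k
    rw [smul_one_eq_diagonal]
    exact Matrix.posDef_diagonal_iff.mpr fun _ => by positivity
  have hCbt : (Cb * Cbᵀ).PosSemidef := by
    have := Matrix.posSemidef_self_mul_conjTranspose Cb
    rwa [conjTranspose_eq_transpose_of_trivial] at this
  have hCtb : (Cbᵀ * Cb).PosSemidef := by
    have := Matrix.posSemidef_conjTranspose_mul_self Cb
    rwa [conjTranspose_eq_transpose_of_trivial] at this
  set D : Matrix (Fin m) (Fin m) ℝ :=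
    Cb * Cbᵀ + (w ^ 2) • (1 : Matrix (Fin m) (Fin m) ℝ) with hDdef
  set B : Matrix (Fin m) (Fin m) ℝ :=
    Cbᵀ * Cb + (w ^ 2) • (1 : Matrix (Fin m) (Fin m) ℝ) with hBdef
  have hD : D.PosDef := Matrix.PosDef.posSemidef_add hCbt (hsm m)
  have hB : B.PosDef := Matrix.PosDef.posSemidef_add hCtb (hsm m)
  have hDu : IsUnit D.det := (Matrix.isUnit_iff_isUnit_det D).mp hD.isUnit
  have hBu : IsUnit B.det := (Matrix.isUnit_iff_isUnit_det B).mp hB.isUnit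
  set A : Matrix (Fin n) (Fin n) ℝ :=
    Jbᵀ * Jb + (w ^ 2) • (1 : Matrix (Fin n) (Fin n) ℝ) with hAdef
  have hAu : IsUnit A.det := by
    rw [← hchol, Matrix.det_mul, Matrix.det_transpose]
    exact hR.mul hR
  -- Gram matrix of Jb
  have hJJ : Jb * Jbᵀ = Cb * Cbᵀ := by
    rw [h1, Matrix.transpose_mul, Matrix.mul_assoc, ← Matrix.mul_assoc Jbh, h3, Matrix.one_mul]
  -- push-through identities
  have key1 : A * Jbᵀ = Jbᵀ * D := by
    rw [hAdef, hDdef, Matrix.add_mul, Matrix.mul_add, Matrix.smul_mul, Matrix.mul_smul,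
      Matrix.one_mul, Matrix.mul_one, Matrix.mul_assoc, hJJ]
  have key2 : B * Cbᵀ = Cbᵀ * D := by
    rw [hBdef, hDdef, Matrix.add_mul, Matrix.mul_add, Matrix.smul_mul, Matrix.mul_smul,
      Matrix.one_mul, Matrix.mul_one, Matrix.mul_assoc]
  have inv1 : A⁻¹ * Jbᵀ = Jbᵀ * D⁻¹ := by
    have : A⁻¹ * (A * Jbᵀ) * D⁻¹ = A⁻¹ * (Jbᵀ * D) * D⁻¹ := by rw [key1]
    rw [← Matrix.mul_assoc A⁻¹ A, Matrix.nonsing_inv_mul _ hAu, Matrix.one_mul,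
      Matrix.mul_assoc A⁻¹, Matrix.mul_assoc, Matrix.mul_nonsing_inv _ hDu,
      Matrix.mul_one] at this
    exact this.symm
  have inv2 : B⁻¹ * Cbᵀ = Cbᵀ * D⁻¹ := by
    have : B⁻¹ * (B * Cbᵀ) * D⁻¹ = B⁻¹ * (Cbᵀ * D) * D⁻¹ := by rw [key2]
    rw [← Matrix.mul_assoc B⁻¹ B, Matrix.nonsing_inv_mul _ hBu, Matrix.one_mul,
      Matrix.mul_assoc B⁻¹, Matrix.mul_assoc, Matrix.mul_nonsing_inv _ hDu,
      Matrix.mul_one] at this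
    exact this.symm
  -- compute C * Cᵀ
  have hCC : C * Cᵀ = Jb * A⁻¹ * Jbᵀ := by
    have : C * Cᵀ = (C * Jh) * (C * Jh)ᵀ := by
      rw [Matrix.transpose_mul, Matrix.mul_assoc, ← Matrix.mul_assoc Jh, h4, Matrix.one_mul]
    rw [this, ← h2, Matrix.transpose_mul, Matrix.transpose_nonsing_inv,
      ← hchol, Matrix.mul_inv_rev, Matrix.mul_assoc, Matrix.mul_assoc, Matrix.mul_assoc]
  calc C * Cᵀ = Jb * A⁻¹ * Jbᵀ := hCC
    _ = Jb * (Jbᵀ * D⁻¹) := by rw [Matrix.mul_assoc, inv1]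
    _ = Cb * Cbᵀ * D⁻¹ := by rw [← Matrix.mul_assoc, hJJ]
    _ = Cb * B⁻¹ * Cbᵀ := by
        rw [Matrix.mul_assoc, ← inv2, Matrix.mul_assoc]
end

section
/- Let m ≥ 1, w ∈ (0,∞), and let C̄, C ∈ ℝ^{m×m} be lower triangular with nonnegative diagonal entries such that: for every a, c̄_aa = 0 if and only if c_aa = 0; whenever c̄_aa = 0 the entire a-th column of C̄ is zero; and whenever c_aa = 0 the entire a-th column of C is zero. Let C̃ ∈ ℝ^{m×m} be lower triangular with positive diagonal entries and C̃ᵀ·C̃ = C̄ᵀ·C̄ + w²·I_m. If C·Cᵀ = (C̄·C̃⁻¹)·(C̄·C̃⁻¹)ᵀ, then C = C̄·C̃⁻¹. -/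
open Matrix

private lemma sum_split_aux {m : ℕ} (j : Fin m) (f : Fin m → ℝ)
    (hf : ∀ k, j < k → f k = 0) :
    ∑ k, f k = f j + ∑ k ∈ Finset.Iio j, f k := by
  rw [← Finset.sum_insert (by simp : j ∉ Finset.Iio j), Finset.Iio_insert]
  exact (Finset.sum_subset (Finset.subset_univ _)
    (fun x _ hx => hf x (lt_of_not_ge (by simpa using hx)))).symm

private lemma gram_entry_aux {m : ℕ} (N : Matrix (Fin m) (Fin m) ℝ)
    (hN : ∀ i j : Fin m, i < j → N i j = 0) (i j : Fin m) :
    (N * Nᵀ) i j = N i j * N j j + ∑ k ∈ Finset.Iio j, N i k * N j k := by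
  rw [mul_apply]
  exact sum_split_aux j (fun k => N i k * Nᵀ k j)
    (fun k hk => by simp [transpose_apply, hN j k hk])

/-- Lower triangular matrices with nonnegative diagonal and the property that a zero
diagonal entry forces the whole column to vanish are determined by their Gram matrix. -/
private lemma tri_gram_unique {m : ℕ} (L M : Matrix (Fin m) (Fin m) ℝ)
    (hLt : ∀ i j : Fin m, i < j → L i j = 0)
    (hMt : ∀ i j : Fin m, i < j → M i j = 0)
    (hLd : ∀ i, 0 ≤ L i i) (hMd : ∀ i, 0 ≤ M i i)
    (hLc : ∀ a : Fin m, L a a = 0 → ∀ i, L i a = 0)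
    (hMc : ∀ a : Fin m, M a a = 0 → ∀ i, M i a = 0)
    (h : L * Lᵀ = M * Mᵀ) : L = M := by
  have key : ∀ n : ℕ, ∀ j : Fin m, (j : ℕ) ≤ n → ∀ i, L i j = M i j := by
    intro n
    induction n using Nat.strong_induction_on with
    | _ n ih =>
      intro j hj i
      have ihcol : ∀ k : Fin m, k < j → ∀ i, L i k = M i k := fun k hk =>
        ih k (lt_of_lt_of_le hk hj) k le_rfl
      have hsum : ∀ i' : Fin m, ∑ k ∈ Finset.Iio j, L i' k * L j k
          = ∑ k ∈ Finset.Iio j, M i' k * M j k := by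
        intro i'
        refine Finset.sum_congr rfl fun k hk => ?_
        have hkj : k < j := Finset.mem_Iio.mp hk
        rw [ihcol k hkj i', ihcol k hkj j]
      have hdiag : L j j = M j j := by
        have h1 := congrFun (congrFun h j) j
        rw [gram_entry_aux L hLt j j, gram_entry_aux M hMt j j, hsum j] at h1
        have h2 : L j j * L j j = M j j * M j j := by linarith
        rcases mul_self_eq_mul_self_iff.mp h2 with h3 | h3
        · exact h3
        · have := hLd j; have := hMd j; linarith
      by_cases h0 : L j j = 0
      · rw [hLc j h0 i, hMc j (hdiag ▸ h0) i]
      · rcases lt_or_ge i j with hij | hij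
        · rw [hLt i j hij, hMt i j hij]
        · have h1 := congrFun (congrFun h i) j
          rw [gram_entry_aux L hLt i j, gram_entry_aux M hMt i j, hsum i] at h1
          have h2 : L i j * L j j = M i j * M j j := by linarith
          rw [hdiag] at h2
          exact mul_right_cancel₀ (hdiag ▸ h0) h2
  ext i j
  exact key j j le_rfl i

/-- Uniqueness of the (degenerate) Cholesky-type factor.  Under the
stated triangularity, sign, and zero-column conditions on `C̄` and `C`, if `C̃` is the
reverse Cholesky factor of `C̄ᵀ·C̄ + w²·I` and `C·Cᵀ = (C̄·C̃⁻¹)·(C̄·C̃⁻¹)ᵀ`, then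
`C = C̄·C̃⁻¹`. -/
theorem eq_of_gram_eq_cholesky_factor
    (m : ℕ) (hm : 1 ≤ m) (w : ℝ) (hw : 0 < w)
    (Cb C Ct : Matrix (Fin m) (Fin m) ℝ)
    (hCbLT : ∀ i j : Fin m, i < j → Cb i j = 0)
    (hCLT : ∀ i j : Fin m, i < j → C i j = 0)
    (hCbdiag : ∀ i, 0 ≤ Cb i i)
    (hCdiag : ∀ i, 0 ≤ C i i)
    (hzero : ∀ a : Fin m, Cb a a = 0 ↔ C a a = 0)
    (hcolCb : ∀ a : Fin m, Cb a a = 0 → ∀ i, Cb i a = 0)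
    (hcolC : ∀ a : Fin m, C a a = 0 → ∀ i, C i a = 0)
    (hCtLT : ∀ i j : Fin m, i < j → Ct i j = 0)
    (hCtdiag : ∀ i, 0 < Ct i i)
    (hCt : Ctᵀ * Ct = Cbᵀ * Cb + (w ^ 2) • (1 : Matrix (Fin m) (Fin m) ℝ))
    (h : C * Cᵀ = (Cb * Ct⁻¹) * (Cb * Ct⁻¹)ᵀ) :
    C = Cb * Ct⁻¹ := by
  -- Ct is invertible
  have hCtBT : Ct.BlockTriangular OrderDual.toDual := fun i j hij =>
    hCtLT i j (by exact hij)
  have hdet : Ct.det = ∏ i, Ct i i := det_of_lowerTriangular Ct hCtBT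
  have hdetpos : 0 < Ct.det := hdet ▸ Finset.prod_pos fun i _ => hCtdiag i
  have hunit : IsUnit Ct.det := isUnit_iff_ne_zero.mpr (ne_of_gt hdetpos)
  haveI : Invertible Ct := Ct.invertibleOfIsUnitDet hunit
  have hinv : Ct⁻¹ * Ct = 1 := nonsing_inv_mul Ct hunit
  -- Ct⁻¹ is lower triangular
  have hIBT : Ct⁻¹.BlockTriangular OrderDual.toDual :=
    blockTriangular_inv_of_blockTriangular hCtBT
  have hILT : ∀ i j : Fin m, i < j → Ct⁻¹ i j = 0 := fun i j hij => hIBT (by exact hij)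
  -- A := Cb * Ct⁻¹ is lower triangular
  set A := Cb * Ct⁻¹ with hA
  have hALT : ∀ i j : Fin m, i < j → A i j = 0 := by
    intro i j hij
    rw [hA, mul_apply]
    refine Finset.sum_eq_zero fun k _ => ?_
    rcases le_or_gt k i with hk | hk
    · rw [hILT k j (lt_of_le_of_lt hk hij), mul_zero]
    · rw [hCbLT i k hk, zero_mul]
  -- diagonal of Ct⁻¹
  have hdinv : ∀ j : Fin m, Ct⁻¹ j j * Ct j j = 1 := by
    intro j
    have h1 := congrFun (congrFun hinv j) j
    rw [mul_apply] at h1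
    rw [Finset.sum_eq_single_of_mem j (Finset.mem_univ j) (fun t _ ht => ?_)] at h1
    · simpa using h1
    · rcases lt_or_gt_of_ne ht with hlt | hgt
      · rw [hCtLT t j hlt, mul_zero]
      · rw [hILT j t hgt, zero_mul]
  have hIpos : ∀ j : Fin m, 0 < Ct⁻¹ j j := by
    intro j
    nlinarith [hdinv j, hCtdiag j]
  -- diagonal of A
  have hAdiag : ∀ j : Fin m, A j j = Cb j j * Ct⁻¹ j j := by
    intro j
    rw [hA, mul_apply]
    refine Finset.sum_eq_single_of_mem j (Finset.mem_univ j) fun t _ ht => ?_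
    rcases lt_or_gt_of_ne ht with hlt | hgt
    · rw [hILT t j hlt, mul_zero]
    · rw [hCbLT j t hgt, zero_mul]
  have hAd : ∀ j : Fin m, 0 ≤ A j j := fun j => by
    rw [hAdiag j]; exact mul_nonneg (hCbdiag j) (le_of_lt (hIpos j))
  -- zero-column property for A
  have hAcol : ∀ a : Fin m, A a a = 0 → ∀ i, A i a = 0 := by
    intro a ha i
    have hCb0 : Cb a a = 0 := by
      have h1 := hAdiag a
      rw [ha] at h1
      rcases mul_eq_zero.mp h1.symm with h2 | h2
      · exact h2
      · exact absurd h2 (ne_of_gt (hIpos a))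
    have hcol := hcolCb a hCb0
    -- column a of Ct is orthogonal to all other columns
    have horth : ∀ k : Fin m, k ≠ a → ∑ t, Ct t k * Ct t a = 0 := by
      intro k hk
      have h1 := congrFun (congrFun hCt k) a
      rw [mul_apply] at h1
      simp only [transpose_apply] at h1
      rw [h1]
      have : (Cbᵀ * Cb) k a = 0 := by
        rw [mul_apply]
        exact Finset.sum_eq_zero fun t _ => by rw [transpose_apply, hcol t, mul_zero]
      simp [Matrix.add_apply, this, one_apply_ne hk]
    -- sub-diagonal entries of column a of Ct vanish
    have hcolCt : ∀ t : Fin m, a < t → Ct t a = 0 := by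
      have main : ∀ n : ℕ, ∀ t : Fin m, m - (t : ℕ) ≤ n → a < t → Ct t a = 0 := by
        intro n
        induction n with
        | zero => intro t ht _; exact absurd ht (by have := t.isLt; omega)
        | succ n ihn =>
          intro t ht hat
          have h0 := horth t (ne_of_gt hat)
          rw [Finset.sum_eq_single_of_mem t (Finset.mem_univ t) (fun s _ hs => ?_)] at h0
          · exact (mul_eq_zero.mp h0).resolve_left (ne_of_gt (hCtdiag t))
          · rcases lt_or_gt_of_ne hs with hlt | hgt
            · rw [hCtLT s t hlt, zero_mul]
            · rw [ihn s (by have := s.isLt; omega) (lt_trans hat hgt), mul_zero]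
      exact fun t => main (m - (t : ℕ)) t le_rfl
    -- column a of Ct⁻¹ is supported on the diagonal
    have hinvcol : ∀ k : Fin m, k ≠ a → Ct⁻¹ k a = 0 := by
      intro k hk
      have h1 := congrFun (congrFun hinv k) a
      rw [mul_apply] at h1
      rw [Finset.sum_eq_single_of_mem a (Finset.mem_univ a) (fun t _ ht => ?_)] at h1
      · rw [one_apply_ne hk] at h1
        exact (mul_eq_zero.mp h1).resolve_right (ne_of_gt (hCtdiag a))
      · rcases lt_or_gt_of_ne ht with hlt | hgt
        · rw [hCtLT t a hlt, mul_zero]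
        · rw [hcolCt t hgt, mul_zero]
    rw [hA, mul_apply]
    refine Finset.sum_eq_zero fun k _ => ?_
    by_cases hk : k = a
    · rw [hk, hcol i, zero_mul]
    · rw [hinvcol k hk, mul_zero]
  exact tri_gram_unique C A hCLT hALT hCdiag hAd hcolC hAcol h
end

section
/- Let m ≥ 1 and let C̄ ∈ ℝ^{m×m} be a nonzero lower triangular matrix with nonnegative diagonal entries. For each w ∈ (0,∞), let C̃_w be the unique lower triangular matrix with positive diagonal entries satisfying C̃_wᵀ·C̃_w = C̄ᵀ·C̄ + w²·I_m, and set C_w = C̄·C̃_w⁻¹. Then, as w → ∞, the a-th diagonal entry of C_w tends to 0 for every a ∈ {1,…,m}, and dn(C_w) → dn(C̄). -/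
open Matrix Filter

/-- The diagonalization number `dn(M) = (∑_i m_ii²)/‖M‖_F²` of a square matrix. -/
noncomputable def dn {m : ℕ} (M : Matrix (Fin m) (Fin m) ℝ) : ℝ :=
  (∑ i, (M i i) ^ 2) / (∑ i, ∑ j, (M i j) ^ 2)

/-- Let `C̃_w` be the reverse Cholesky factor of `C̄ᵀ·C̄ + w²·I_m` and
`C_w = C̄·C̃_w⁻¹`.  As `w → ∞`, each diagonal entry of `C_w` tends to `0` and
`dn(C_w) → dn(C̄)`. -/
theorem preconditioning_limit_w_to_infty
    (m : ℕ) (hm : 1 ≤ m)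
    (Cb : Matrix (Fin m) (Fin m) ℝ)
    (hCb0 : Cb ≠ 0)
    (hCbLT : ∀ i j : Fin m, i < j → Cb i j = 0)
    (hCbdiag : ∀ i, 0 ≤ Cb i i)
    (Ct : ℝ → Matrix (Fin m) (Fin m) ℝ)
    (hCtLT : ∀ w, 0 < w → ∀ i j : Fin m, i < j → Ct w i j = 0)
    (hCtdiag : ∀ w, 0 < w → ∀ i, 0 < Ct w i i)
    (hCt : ∀ w, 0 < w →
      (Ct w)ᵀ * Ct w = Cbᵀ * Cb + (w ^ 2) • (1 : Matrix (Fin m) (Fin m) ℝ)) :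
    (∀ a : Fin m, Tendsto (fun w => (Cb * (Ct w)⁻¹) a a) atTop (nhds 0)) ∧
    Tendsto (fun w => dn (Cb * (Ct w)⁻¹)) atTop (nhds (dn Cb)) := by
  classical
  set D : ℝ → Matrix (Fin m) (Fin m) ℝ := fun w => (w⁻¹) • Ct w with hD_def
  have hDapp : ∀ w i j, D w i j = w⁻¹ * Ct w i j := by
    intro w i j; simp [hD_def]
  have hpos : ∀ w : ℝ, 0 < w → ∀ i : Fin m, 0 < D w i i := by
    intro w hw i
    rw [hDapp]
    exact mul_pos (inv_pos.mpr hw) (hCtdiag w hw i)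
  have hzero : ∀ w : ℝ, 0 < w → ∀ i j : Fin m, i < j → D w i j = 0 := by
    intro w hw i j hij
    rw [hDapp, hCtLT w hw i j hij, mul_zero]
  -- entry identity for Ctᵀ Ct
  have hent : ∀ w : ℝ, 0 < w → ∀ k j : Fin m,
      ∑ i, Ct w i k * Ct w i j
        = (Cbᵀ * Cb) k j + w ^ 2 * (if k = j then 1 else 0) := by
    intro w hw k j
    have h := congrFun (congrFun (hCt w hw) k) j
    simpa [Matrix.mul_apply, Matrix.transpose_apply, Matrix.add_apply,
      Matrix.smul_apply, Matrix.one_apply, smul_eq_mul] using h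
  -- limit of Gram entries of D
  have hs : ∀ k j : Fin m, Tendsto (fun w => ∑ i, D w i k * D w i j) atTop
      (nhds (if k = j then (1:ℝ) else 0)) := by
    intro k j
    have hlim : Tendsto
        (fun w : ℝ => (Cbᵀ * Cb) k j * (w⁻¹) ^ 2 + (if k = j then (1:ℝ) else 0))
        atTop (nhds (if k = j then (1:ℝ) else 0)) := by
      have h1 : Tendsto (fun w : ℝ => (Cbᵀ * Cb) k j * (w⁻¹) ^ 2) atTop (nhds 0) := by
        have h2 := (tendsto_inv_atTop_zero (𝕜 := ℝ)).pow 2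
        simpa using h2.const_mul ((Cbᵀ * Cb) k j)
      simpa using h1.add tendsto_const_nhds
    refine Tendsto.congr' ?_ hlim
    filter_upwards [eventually_gt_atTop 0] with w hw
    have h := hent w hw k j
    have hw0 : (w:ℝ) ≠ 0 := ne_of_gt hw
    have hsum : ∑ i, D w i k * D w i j
        = (w⁻¹) ^ 2 * ∑ i, Ct w i k * Ct w i j := by
      rw [Finset.mul_sum]
      refine Finset.sum_congr rfl fun i _ => ?_
      rw [hDapp, hDapp]; ring
    rw [hsum, h]
    field_simp
  -- the key inductive step, going up one row
  have step : ∀ k : Fin m,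
      (∀ i : Fin m, k < i → ∀ j : Fin m,
        Tendsto (fun w => D w i j) atTop (nhds (if i = j then (1:ℝ) else 0))) →
      ∀ j : Fin m, Tendsto (fun w => D w k j) atTop
        (nhds (if k = j then (1:ℝ) else 0)) := by
    intro k IH
    have htail : ∀ j : Fin m,
        Tendsto (fun w => ∑ i ∈ Finset.univ.filter (fun i => k < i), D w i k * D w i j)
          atTop (nhds 0) := by
      intro j
      have h : ∀ i ∈ Finset.univ.filter (fun i => k < i),
          Tendsto (fun w => D w i k * D w i j) atTop (nhds 0) := by
        intro i hi
        simp only [Finset.mem_filter, Finset.mem_univ, true_and] at hi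
        have h1 := IH i hi k
        have h2 := IH i hi j
        rw [if_neg hi.ne'] at h1
        simpa using h1.mul h2
      have := tendsto_finset_sum _ h
      simpa using this
    have hsplit : ∀ j : Fin m, Tendsto (fun w => D w k k * D w k j) atTop
        (nhds (if k = j then (1:ℝ) else 0)) := by
      intro j
      have h := (hs k j).sub (htail j)
      rw [sub_zero] at h
      refine Tendsto.congr' ?_ h
      filter_upwards [eventually_gt_atTop 0] with w hw
      have hsum2 : ∑ i ∈ Finset.univ.filter (fun i => ¬ k < i), D w i k * D w i j
          = D w k k * D w k j := by
        refine Finset.sum_eq_single_of_mem k (by simp) ?_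
        intro i hi hik
        simp only [Finset.mem_filter, Finset.mem_univ, true_and, not_lt] at hi
        rw [hzero w hw i k (lt_of_le_of_ne hi hik), zero_mul]
      have hall := Finset.sum_filter_add_sum_filter_not Finset.univ
        (fun i => k < i) (fun i => D w i k * D w i j)
      rw [hsum2] at hall
      linarith [hall]
    have hkk : Tendsto (fun w => D w k k) atTop (nhds 1) := by
      have h := hsplit k
      rw [if_pos rfl] at h
      have hsq : Tendsto (fun w => Real.sqrt (D w k k * D w k k)) atTop (nhds 1) := by
        have h2 := (Real.continuous_sqrt.tendsto 1).comp h
        simpa [Function.comp_def] using h2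
      refine Tendsto.congr' ?_ hsq
      filter_upwards [eventually_gt_atTop 0] with w hw
      rw [Real.sqrt_mul_self (le_of_lt (hpos w hw k))]
    intro j
    rcases eq_or_ne k j with rfl | hkj
    · simpa using hkk
    · have h := (hsplit j).div hkk one_ne_zero
      rw [if_neg hkj] at h ⊢
      rw [zero_div] at h
      refine Tendsto.congr' ?_ h
      filter_upwards [eventually_gt_atTop 0] with w hw
      simp only [Pi.div_apply]
      rw [mul_div_cancel_left₀ _ (hpos w hw k).ne']
  -- downward induction over rows
  have key : ∀ k j : Fin m,
      Tendsto (fun w => D w k j) atTop (nhds (if k = j then (1:ℝ) else 0)) := by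
    have main : ∀ t : ℕ, ∀ k : Fin m, m ≤ k.val + t + 1 → ∀ j : Fin m,
        Tendsto (fun w => D w k j) atTop (nhds (if k = j then (1:ℝ) else 0)) := by
      intro t
      induction t with
      | zero =>
        intro k hk
        apply step
        intro i hi j
        exfalso
        have h1 := i.isLt
        have h2 := Fin.lt_def.mp hi
        omega
      | succ n ih =>
        intro k hk
        apply step
        intro i hi j
        have h2 := Fin.lt_def.mp hi
        exact ih i (by omega) j
    intro k j
    exact main m k (by omega) j
  -- matrix-level limit D → 1
  have hDt : Tendsto D atTop (nhds (1 : Matrix (Fin m) (Fin m) ℝ)) := by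
    refine tendsto_pi_nhds.mpr ?_
    intro i
    refine tendsto_pi_nhds.mpr ?_
    intro j
    simpa [Matrix.one_apply] using key i j
  -- inverse limit
  have hinv : Tendsto (fun w => (D w)⁻¹) atTop (nhds 1) := by
    have hca : ContinuousAt Inv.inv (1 : Matrix (Fin m) (Fin m) ℝ) := by
      apply continuousAt_matrix_inv
      rw [Matrix.det_one, Ring.inverse_eq_inv']
      exact continuousAt_inv₀ one_ne_zero
    have h := hca.tendsto.comp hDt
    simpa [Function.comp_def] using h
  have hinv' : ∀ l j : Fin m, Tendsto (fun w => (D w)⁻¹ l j) atTop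
      (nhds ((1 : Matrix (Fin m) (Fin m) ℝ) l j)) := by
    intro l j
    exact (tendsto_pi_nhds.mp (tendsto_pi_nhds.mp hinv l)) j
  -- entrywise limit of Cb * (D w)⁻¹
  have hXe : ∀ i j : Fin m,
      Tendsto (fun w => (Cb * (D w)⁻¹) i j) atTop (nhds (Cb i j)) := by
    intro i j
    have h := tendsto_finset_sum Finset.univ
      (fun l (_ : l ∈ Finset.univ) => (tendsto_const_nhds (x := Cb i l)).mul (hinv' l j))
    have he : (∑ l, Cb i l * (1 : Matrix (Fin m) (Fin m) ℝ) l j) = Cb i j := by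
      have := congrFun (congrFun (mul_one Cb) i) j
      simpa [Matrix.mul_apply] using this
    rw [he] at h
    refine h.congr fun w => ?_
    rw [Matrix.mul_apply]
  -- invertibility of Ct w
  have hCtdet : ∀ w : ℝ, 0 < w → IsUnit (Ct w).det := by
    intro w hw
    have hbt : ((Ct w)ᵀ).BlockTriangular id := by
      intro i j hij
      exact hCtLT w hw j i hij
    have hd : (Ct w).det = ∏ i, Ct w i i := by
      rw [← Matrix.det_transpose, Matrix.det_of_upperTriangular hbt]
      simp [Matrix.transpose_apply]
    rw [hd]
    exact (Finset.prod_pos fun i _ => hCtdiag w hw i).ne'.isUnit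
  have hDinv : ∀ w : ℝ, 0 < w → (D w)⁻¹ = w • (Ct w)⁻¹ := by
    intro w hw
    apply Matrix.inv_eq_left_inv
    have h1 : (Ct w)⁻¹ * Ct w = 1 := Matrix.nonsing_inv_mul _ (hCtdet w hw)
    calc (w • (Ct w)⁻¹) * D w = (w⁻¹ * w) • ((Ct w)⁻¹ * Ct w) := by
          simp [hD_def, Matrix.smul_mul, Matrix.mul_smul, smul_smul]
      _ = 1 := by rw [inv_mul_cancel₀ hw.ne', h1, one_smul]
  have hRel : ∀ w : ℝ, 0 < w → Cb * (Ct w)⁻¹ = w⁻¹ • (Cb * (D w)⁻¹) := by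
    intro w hw
    rw [hDinv w hw, Matrix.mul_smul, smul_smul, inv_mul_cancel₀ hw.ne', one_smul]
  constructor
  · intro a
    have h : Tendsto (fun w : ℝ => w⁻¹ * ((Cb * (D w)⁻¹) a a)) atTop (nhds 0) := by
      simpa using tendsto_inv_atTop_zero.mul (hXe a a)
    refine Tendsto.congr' ?_ h
    filter_upwards [eventually_gt_atTop 0] with w hw
    rw [hRel w hw]
    simp [Matrix.smul_apply]
  · have hden : (∑ i, ∑ j, (Cb i j) ^ 2) ≠ 0 := by
      obtain ⟨i, j, hij⟩ : ∃ i j, Cb i j ≠ 0 := by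
        by_contra h
        push_neg at h
        exact hCb0 (by ext i j; simp [h])
      have hpos2 : 0 < ∑ i, ∑ j, (Cb i j) ^ 2 := by
        refine Finset.sum_pos'
          (fun i _ => Finset.sum_nonneg fun j _ => sq_nonneg _)
          ⟨i, Finset.mem_univ i, ?_⟩
        refine Finset.sum_pos' (fun j _ => sq_nonneg _)
          ⟨j, Finset.mem_univ j, by positivity⟩
      exact hpos2.ne'
    have hnum : Tendsto (fun w => ∑ i, ((Cb * (D w)⁻¹) i i) ^ 2) atTop
        (nhds (∑ i, (Cb i i) ^ 2)) :=
      tendsto_finset_sum _ fun i _ => (hXe i i).pow 2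
    have hden2 : Tendsto (fun w => ∑ i, ∑ j, ((Cb * (D w)⁻¹) i j) ^ 2) atTop
        (nhds (∑ i, ∑ j, (Cb i j) ^ 2)) :=
      tendsto_finset_sum _ fun i _ => tendsto_finset_sum _ fun j _ => (hXe i j).pow 2
    have h := hnum.div hden2 hden
    refine Tendsto.congr' ?_ h
    filter_upwards [eventually_gt_atTop 0] with w hw
    simp only [Pi.div_apply]
    rw [hRel w hw]
    unfold dn
    simp only [Matrix.smul_apply, smul_eq_mul, mul_pow]
    rw [← Finset.mul_sum]
    have hd2 : ∑ i, ∑ j, (w⁻¹) ^ 2 * ((Cb * (D w)⁻¹) i j) ^ 2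
        = (w⁻¹) ^ 2 * ∑ i, ∑ j, ((Cb * (D w)⁻¹) i j) ^ 2 := by
      rw [Finset.mul_sum]
      exact Finset.sum_congr rfl fun i _ => by rw [Finset.mul_sum]
    rw [hd2, mul_div_mul_left _ _ (pow_ne_zero 2 (inv_ne_zero hw.ne'))]
end

section
/- Let m ≥ 1 and let C̄ ∈ ℝ^{m×m} be lower triangular with strictly positive diagonal entries (in particular invertible). For each w ∈ (0,∞), let C̃_w be the unique lower triangular matrix with positive diagonal entries satisfying C̃_wᵀ·C̃_w = C̄ᵀ·C̄ + w²·I_m, and set C_w = C̄·C̃_w⁻¹. Then, as w → 0⁺, the a-th diagonal entry of C_w tends to 1 for every a ∈ {1,…,m}, and dn(C_w) → 1. -/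
open Matrix Filter Topology

private lemma col_sum_split {m : ℕ} (L : Matrix (Fin m) (Fin m) ℝ)
    (hL : ∀ k l : Fin m, k < l → L k l = 0) (i j : Fin m) :
    ∑ k, L k i * L k j
      = L i i * L i j + ∑ k ∈ Finset.univ.filter (fun k => i < k), L k i * L k j := by
  classical
  rw [← Finset.sum_filter_add_sum_filter_not Finset.univ (fun k => i ≤ k)]
  have h1 : ∑ k ∈ Finset.univ.filter (fun k => ¬ i ≤ k), L k i * L k j = 0 := by
    apply Finset.sum_eq_zero; intro k hk
    simp only [Finset.mem_filter, not_le] at hk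
    rw [hL k i hk.2, zero_mul]
  have h2 : Finset.univ.filter (fun k => i ≤ k)
      = insert i (Finset.univ.filter (fun k => i < k)) := by
    ext k
    simp [Finset.mem_insert, le_iff_lt_or_eq, or_comm, eq_comm]
  rw [h1, add_zero, h2, Finset.sum_insert (by simp)]


/-- Let `C̄` be lower triangular with strictly positive diagonal, `C̃_w`
the reverse Cholesky factor of `C̄ᵀ·C̄ + w²·I_m`, and `C_w = C̄·C̃_w⁻¹`.  As `w → 0⁺`,
each diagonal entry of `C_w` tends to `1` and `dn(C_w) → 1`. -/
theorem preconditioning_limit_w_to_zero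
    (m : ℕ) (hm : 1 ≤ m)
    (Cb : Matrix (Fin m) (Fin m) ℝ)
    (hCbLT : ∀ i j : Fin m, i < j → Cb i j = 0)
    (hCbdiag : ∀ i, 0 < Cb i i)
    (Ct : ℝ → Matrix (Fin m) (Fin m) ℝ)
    (hCtLT : ∀ w, 0 < w → ∀ i j : Fin m, i < j → Ct w i j = 0)
    (hCtdiag : ∀ w, 0 < w → ∀ i, 0 < Ct w i i)
    (hCt : ∀ w, 0 < w →
      (Ct w)ᵀ * Ct w = Cbᵀ * Cb + (w ^ 2) • (1 : Matrix (Fin m) (Fin m) ℝ)) :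
    (∀ a : Fin m, Tendsto (fun w => (Cb * (Ct w)⁻¹) a a) (𝓝[>] 0) (nhds 1)) ∧
    Tendsto (fun w => dn (Cb * (Ct w)⁻¹)) (𝓝[>] 0) (nhds 1) := by
  classical
  have hmem : ∀ᶠ w in 𝓝[>] (0:ℝ), 0 < w := self_mem_nhdsWithin
  -- entrywise version of hCt
  have hA : ∀ w, 0 < w → ∀ i j : Fin m,
      ∑ k, Ct w k i * Ct w k j
        = (∑ k, Cb k i * Cb k j) + w ^ 2 * (if i = j then (1:ℝ) else 0) := by
    intro w hw i j
    have := congrFun (congrFun (hCt w hw) i) j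
    simpa [Matrix.mul_apply, Matrix.transpose_apply, Matrix.add_apply,
      Matrix.smul_apply, Matrix.one_apply, smul_eq_mul] using this
  have hw0 : Tendsto (fun w : ℝ => w) (𝓝[>] (0:ℝ)) (𝓝 0) :=
    tendsto_id.mono_left nhdsWithin_le_nhds
  -- main entrywise convergence
  have key : ∀ n : ℕ, ∀ i : Fin m, m - i.val ≤ n →
      ∀ j, Tendsto (fun w => Ct w i j) (𝓝[>] (0:ℝ)) (𝓝 (Cb i j)) := by
    intro n
    induction n with
    | zero => intro i hi; exact absurd hi (by have := i.isLt; omega)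
    | succ n IH =>
      intro i hi
      have IH' : ∀ k : Fin m, i < k →
          ∀ j, Tendsto (fun w => Ct w k j) (𝓝[>] (0:ℝ)) (𝓝 (Cb k j)) := by
        intro k hk
        exact IH k (by have := k.isLt; have := i.isLt; have : i.val < k.val := hk; omega)
      -- tail sums converge
      have tail : ∀ j : Fin m,
          Tendsto (fun w => ∑ k ∈ Finset.univ.filter (fun k => i < k), Ct w k i * Ct w k j)
            (𝓝[>] (0:ℝ))
            (𝓝 (∑ k ∈ Finset.univ.filter (fun k => i < k), Cb k i * Cb k j)) := by
        intro j
        refine tendsto_finset_sum _ (fun k hk => ?_)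
        have hik : i < k := (Finset.mem_filter.mp hk).2
        exact (IH' k hik i).mul (IH' k hik j)
      -- product convergence: Ct w i i * Ct w i j → Cb i i * Cb i j
      have hprod : ∀ j : Fin m,
          Tendsto (fun w => Ct w i i * Ct w i j) (𝓝[>] (0:ℝ)) (𝓝 (Cb i i * Cb i j)) := by
        intro j
        have heq : ∀ᶠ w in 𝓝[>] (0:ℝ),
            ((∑ k, Cb k i * Cb k j) + w ^ 2 * (if i = j then (1:ℝ) else 0))
              - (∑ k ∈ Finset.univ.filter (fun k => i < k), Ct w k i * Ct w k j)
            = Ct w i i * Ct w i j := by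
          filter_upwards [hmem] with w hw
          rw [← hA w hw i j, col_sum_split (Ct w) (hCtLT w hw) i j]
          ring
        have hlim : Tendsto (fun w : ℝ =>
            ((∑ k, Cb k i * Cb k j) + w ^ 2 * (if i = j then (1:ℝ) else 0))
              - (∑ k ∈ Finset.univ.filter (fun k => i < k), Ct w k i * Ct w k j))
            (𝓝[>] (0:ℝ))
            (𝓝 (Cb i i * Cb i j)) := by
          have h1 : Tendsto (fun w : ℝ => w ^ 2 * (if i = j then (1:ℝ) else 0))
              (𝓝[>] (0:ℝ)) (𝓝 0) := by
            have := ((hw0.pow 2).mul_const (if i = j then (1:ℝ) else 0))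
            simpa using this
          have h2 := ((tendsto_const_nhds (x := (∑ k, Cb k i * Cb k j))).add h1).sub (tail j)
          have : (∑ k, Cb k i * Cb k j) + 0
              - (∑ k ∈ Finset.univ.filter (fun k => i < k), Cb k i * Cb k j)
              = Cb i i * Cb i j := by
            rw [add_zero, col_sum_split Cb hCbLT i j]; ring
          rwa [this] at h2
        exact hlim.congr' heq
      -- diagonal convergence via sqrt
      have hdiag : Tendsto (fun w => Ct w i i) (𝓝[>] (0:ℝ)) (𝓝 (Cb i i)) := by
        have h1 : Tendsto (fun w => Real.sqrt (Ct w i i * Ct w i i)) (𝓝[>] (0:ℝ))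
            (𝓝 (Real.sqrt (Cb i i * Cb i i))) :=
          (Real.continuous_sqrt.continuousAt.tendsto).comp (hprod i)
        rw [Real.sqrt_mul_self (hCbdiag i).le] at h1
        refine h1.congr' ?_
        filter_upwards [hmem] with w hw
        rw [Real.sqrt_mul_self (hCtdiag w hw i).le]
      intro j
      have h2 : Tendsto (fun w => Ct w i i * Ct w i j / Ct w i i) (𝓝[>] (0:ℝ))
          (𝓝 (Cb i i * Cb i j / Cb i i)) :=
        (hprod j).div hdiag (hCbdiag i).ne'
      rw [mul_div_cancel_left₀ _ (hCbdiag i).ne'] at h2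
      refine h2.congr' ?_
      filter_upwards [hmem] with w hw
      rw [mul_div_cancel_left₀ _ (hCtdiag w hw i).ne']
  have hCtM : Tendsto Ct (𝓝[>] (0:ℝ)) (𝓝 Cb) := by
    refine tendsto_pi_nhds.mpr ?_
    intro i
    refine tendsto_pi_nhds.mpr ?_
    intro j
    exact key m i (by omega) j
  have hdet : Cb.det ≠ 0 := by
    have : Cb.det = ∏ i, Cb i i :=
      Matrix.det_of_lowerTriangular Cb (fun i j h => hCbLT i j h)
    rw [this]
    exact (Finset.prod_pos (fun i _ => hCbdiag i)).ne'
  have hinvcont : ContinuousAt Inv.inv Cb :=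
    continuousAt_matrix_inv Cb (NormedRing.inverse_continuousAt (Units.mk0 Cb.det hdet))
  have hinv : Tendsto (fun w => (Ct w)⁻¹) (𝓝[>] (0:ℝ)) (𝓝 Cb⁻¹) :=
    hinvcont.tendsto.comp hCtM
  have hmul : Continuous (fun A : Matrix (Fin m) (Fin m) ℝ => Cb * A) :=
    continuous_const.matrix_mul continuous_id
  have hC : Tendsto (fun w => Cb * (Ct w)⁻¹) (𝓝[>] (0:ℝ)) (𝓝 (1 : Matrix (Fin m) (Fin m) ℝ)) := by
    have := hmul.continuousAt.tendsto.comp hinv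
    rwa [Matrix.mul_nonsing_inv Cb (isUnit_iff_ne_zero.mpr hdet)] at this
  constructor
  · intro a
    have : Tendsto (fun M : Matrix (Fin m) (Fin m) ℝ => M a a) (𝓝 (1 : Matrix (Fin m) (Fin m) ℝ))
        (𝓝 ((1 : Matrix (Fin m) (Fin m) ℝ) a a)) :=
      ((continuous_apply a).comp (continuous_apply a)).continuousAt.tendsto
    have h := this.comp hC
    rw [Matrix.one_apply_eq] at h
    exact h
  · have hnum : Continuous (fun M : Matrix (Fin m) (Fin m) ℝ => ∑ i, (M i i) ^ 2) := by
      refine continuous_finset_sum _ (fun i _ => ?_)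
      exact (((continuous_apply i).comp (continuous_apply i))).pow 2
    have hden : Continuous (fun M : Matrix (Fin m) (Fin m) ℝ => ∑ i, ∑ j, (M i j) ^ 2) := by
      refine continuous_finset_sum _ (fun i _ => ?_)
      refine continuous_finset_sum _ (fun j _ => ?_)
      exact (((continuous_apply j).comp (continuous_apply i))).pow 2
    have hden1 : (∑ i, ∑ j, ((1 : Matrix (Fin m) (Fin m) ℝ) i j) ^ 2) = (m : ℝ) := by
      have : ∀ i : Fin m, ∑ j, ((1 : Matrix (Fin m) (Fin m) ℝ) i j) ^ 2 = 1 := by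
        intro i
        have : ∀ j : Fin m, ((1 : Matrix (Fin m) (Fin m) ℝ) i j) ^ 2
            = if i = j then (1:ℝ) else 0 := by
          intro j; rw [Matrix.one_apply]; split <;> norm_num
        simp [this]
      simp [this]
    have hnum1 : (∑ i, ((1 : Matrix (Fin m) (Fin m) ℝ) i i) ^ 2) = (m : ℝ) := by
      simp [Matrix.one_apply_eq]
    have hm0 : (m : ℝ) ≠ 0 := by
      have : 0 < m := hm
      exact_mod_cast this.ne'
    have hdncont : ContinuousAt dn (1 : Matrix (Fin m) (Fin m) ℝ) := by
      apply ContinuousAt.div hnum.continuousAt hden.continuousAt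
      rw [hden1]; exact hm0
    have h := hdncont.tendsto.comp hC
    have hdn1 : dn (1 : Matrix (Fin m) (Fin m) ℝ) = 1 := by
      rw [dn, hnum1, hden1, div_self hm0]
    rw [hdn1] at h
    exact h
end

section
/- Let m ≤ n and let J̄ : ℝ^{1+n} → ℝ^{m×n} be continuous. For each w ∈ (0,∞) and x ∈ ℝ^{1+n}, let R_w(x) ∈ ℝ^{n×n} be the unique upper triangular matrix with positive diagonals such that R_w(x)ᵀ·R_w(x) = J̄(x)ᵀ·J̄(x) + w²·I_n, and suppose J̄(x)·R_w(x)⁻¹ = C_w(x)·Ĵ_w(x) where C_w(x) ∈ ℝ^{m×m} is lower triangular with nonnegative diagonal entries and Ĵ_w(x) ∈ ℝ^{m×n} satisfies Ĵ_w(x)·Ĵ_w(x)ᵀ = I_m. Let Ω ⊆ ℝ^{1+n} be a compact set on which rank(J̄(x)) = m for every x ∈ Ω. Then for every ε > 0 there exists w₀ ∈ (0,∞) such that for all w ∈ (0,w₀), all a ∈ {1,…,m}, and all x ∈ Ω: |1 − c_{w,aa}(x)²| < ε and |1 − dn(C_w(x))| < ε, where c_{w,aa}(x) is the a-th diagonal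 entry of C_w(x). -/
open Matrix

lemma auxFullRankIsUnit {m : ℕ} (A : Matrix (Fin m) (Fin m) ℝ) (h : A.rank = m) :
    IsUnit A.det := by
  have hsurj : Function.Surjective A.mulVec := by
    have : Function.Surjective A.mulVecLin := by
      rw [← LinearMap.range_eq_top]
      apply Submodule.eq_top_of_finrank_eq
      rw [show Module.finrank ℝ (LinearMap.range A.mulVecLin) = A.rank from rfl, h]
      simp [Module.finrank_fintype_fun_eq_card]
    exact this
  exact (Matrix.isUnit_iff_isUnit_det A).mp (Matrix.mulVec_surjective_iff_isUnit.mp hsurj)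

lemma auxPosDefG {m n : ℕ} (J : Matrix (Fin m) (Fin n) ℝ) {w : ℝ} (hw : 0 < w) :
    (J * Jᵀ + (w ^ 2) • (1 : Matrix (Fin m) (Fin m) ℝ)).PosDef := by
  refine Matrix.PosDef.posSemidef_add ?_ ?_
  · have := Matrix.posSemidef_self_mul_conjTranspose J
    rwa [Matrix.conjTranspose_eq_transpose_of_trivial] at this
  · rw [Matrix.smul_one_eq_diagonal]
    exact Matrix.posDef_diagonal_iff.mpr fun _ => by positivity

lemma auxKeyIdentity {m n : ℕ} (J : Matrix (Fin m) (Fin n) ℝ)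
    (Rw : Matrix (Fin n) (Fin n) ℝ) (C : Matrix (Fin m) (Fin m) ℝ)
    (Q : Matrix (Fin m) (Fin n) ℝ) {w : ℝ} (hw : 0 < w)
    (hRut : ∀ i j : Fin n, j < i → Rw i j = 0) (hRdiag : ∀ i, 0 < Rw i i)
    (hchol : Rwᵀ * Rw = Jᵀ * J + (w ^ 2) • 1)
    (hfac : J * Rw⁻¹ = C * Q) (hQ : Q * Qᵀ = 1) :
    C * Cᵀ = 1 - (w ^ 2) • (J * Jᵀ + (w ^ 2) • (1 : Matrix (Fin m) (Fin m) ℝ))⁻¹ := by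
  have hRdet : IsUnit Rw.det := by
    rw [Matrix.det_of_upperTriangular (fun i j h => hRut i j h)]
    exact (Finset.prod_pos (fun i _ => hRdiag i)).ne'.isUnit
  have hMdet : IsUnit (Jᵀ * J + (w ^ 2) • (1 : Matrix (Fin n) (Fin n) ℝ)).det := by
    rw [← hchol, Matrix.det_mul, Matrix.det_transpose]
    exact hRdet.mul hRdet
  have hGdet : IsUnit (J * Jᵀ + (w ^ 2) • (1 : Matrix (Fin m) (Fin m) ℝ)).det :=
    (Matrix.isUnit_iff_isUnit_det _).mp (auxPosDefG J hw).isUnit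
  set M := Jᵀ * J + (w ^ 2) • (1 : Matrix (Fin n) (Fin n) ℝ) with hM
  set G := J * Jᵀ + (w ^ 2) • (1 : Matrix (Fin m) (Fin m) ℝ) with hG
  have hCC : C * Cᵀ = J * M⁻¹ * Jᵀ := by
    have h1 : (J * Rw⁻¹) * (J * Rw⁻¹)ᵀ = C * Cᵀ := by
      rw [hfac, Matrix.transpose_mul, Matrix.mul_assoc, ← Matrix.mul_assoc Q Qᵀ Cᵀ, hQ,
        Matrix.one_mul]
    have h2 : (J * Rw⁻¹) * (J * Rw⁻¹)ᵀ = J * M⁻¹ * Jᵀ := by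
      rw [Matrix.transpose_mul, Matrix.transpose_nonsing_inv, ← hchol, Matrix.mul_inv_rev]
      simp only [Matrix.mul_assoc]
    rw [← h1, h2]
  have hcomm : G * J = J * M := by
    rw [hG, hM, Matrix.add_mul, Matrix.mul_add, Matrix.smul_mul, Matrix.mul_smul,
      Matrix.one_mul, Matrix.mul_one, Matrix.mul_assoc]
  have hswap : J * M⁻¹ = G⁻¹ * J := by
    have h3 : G⁻¹ * (G * J) * M⁻¹ = G⁻¹ * (J * M) * M⁻¹ := by rw [hcomm]
    rw [← Matrix.mul_assoc G⁻¹ G J, Matrix.nonsing_inv_mul _ hGdet, Matrix.one_mul,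
      Matrix.mul_assoc G⁻¹ (J * M) M⁻¹, Matrix.mul_assoc J M M⁻¹,
      Matrix.mul_nonsing_inv _ hMdet, Matrix.mul_one] at h3
    exact h3
  have hJJ : J * Jᵀ = G - (w ^ 2) • 1 := by rw [hG]; abel
  rw [hCC, hswap, Matrix.mul_assoc, hJJ, Matrix.mul_sub, Matrix.nonsing_inv_mul _ hGdet,
    Matrix.mul_smul, Matrix.mul_one]

lemma auxEta (m : ℕ) {ε : ℝ} (hε : 0 < ε) :
    ∃ η : ℝ, 0 < η ∧ η < 1 ∧ η < ε ∧
      (1 + η - (1 - η) / (1 + η) ^ (m - 1)) / (1 - η) < ε := by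
  set g : ℝ → ℝ := fun η => (1 + η - (1 - η) / (1 + η) ^ (m - 1)) / (1 - η) with hg
  have hgc : ContinuousAt g 0 := by
    apply ContinuousAt.div
    · exact ContinuousAt.sub (by fun_prop)
        (ContinuousAt.div (by fun_prop) (by fun_prop) (by norm_num))
    · fun_prop
    · norm_num
  have hg0 : g 0 = 0 := by simp [hg]
  obtain ⟨r, hr, hball⟩ := Metric.continuousAt_iff.mp hgc ε hε
  set η := min r (min ε 1) / 2 with hη
  have hη0 : 0 < η := by positivity
  have hηr : η < r := by
    have : η ≤ r / 2 := by rw [hη]; gcongr; exact min_le_left _ _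
    linarith
  have hηε : η < ε := by
    have : η ≤ ε / 2 := by
      rw [hη]; gcongr
      exact le_trans (min_le_right _ _) (min_le_left _ _)
    linarith
  have hη1 : η < 1 := by
    have : η ≤ 1 / 2 := by
      rw [hη]; gcongr
      exact le_trans (min_le_right _ _) (min_le_right _ _)
    linarith
  refine ⟨η, hη0, hη1, hηε, ?_⟩
  have := hball (by simpa [abs_of_pos hη0] using hηr : dist η 0 < r)
  rw [hg0, dist_zero_right] at this
  calc g η ≤ |g η| := le_abs_self _
    _ < ε := this

theorem preconditioning_uniform_convergence_on_compact
    (m n : ℕ) (hm : 1 ≤ m) (hmn : m ≤ n)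
    (Jb : EuclideanSpace ℝ (Fin (1 + n)) → Matrix (Fin m) (Fin n) ℝ)
    (hJb : Continuous Jb)
    (R : ℝ → EuclideanSpace ℝ (Fin (1 + n)) → Matrix (Fin n) (Fin n) ℝ)
    (Cw : ℝ → EuclideanSpace ℝ (Fin (1 + n)) → Matrix (Fin m) (Fin m) ℝ)
    (Jh : ℝ → EuclideanSpace ℝ (Fin (1 + n)) → Matrix (Fin m) (Fin n) ℝ)
    (hRut : ∀ w, 0 < w → ∀ x, ∀ i j : Fin n, j < i → R w x i j = 0)
    (hRdiag : ∀ w, 0 < w → ∀ x, ∀ i : Fin n, 0 < R w x i i)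
    (hRchol : ∀ w, 0 < w → ∀ x,
      (R w x)ᵀ * R w x = (Jb x)ᵀ * Jb x + (w ^ 2) • (1 : Matrix (Fin n) (Fin n) ℝ))
    (hCLT : ∀ w, 0 < w → ∀ x, ∀ i j : Fin m, i < j → Cw w x i j = 0)
    (hCdiag : ∀ w, 0 < w → ∀ x, ∀ i : Fin m, 0 ≤ Cw w x i i)
    (hfac : ∀ w, 0 < w → ∀ x, Jb x * (R w x)⁻¹ = Cw w x * Jh w x)
    (hJh : ∀ w, 0 < w → ∀ x, Jh w x * (Jh w x)ᵀ = 1)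
    (Ω : Set (EuclideanSpace ℝ (Fin (1 + n))))
    (hΩ : IsCompact Ω)
    (hrank : ∀ x ∈ Ω, (Jb x).rank = m) :
    ∀ ε : ℝ, 0 < ε → ∃ w₀ : ℝ, 0 < w₀ ∧ ∀ w : ℝ, 0 < w → w < w₀ →
      ∀ a : Fin m, ∀ x ∈ Ω,
        |1 - (Cw w x a a) ^ 2| < ε ∧ |1 - dn (Cw w x)| < ε := by
  intro ε hε
  obtain ⟨η, hη0, hη1, hηε, hgη⟩ := auxEta m hε
  set L : ℝ := (1 - η) / (1 + η) ^ (m - 1) with hLdef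
  -- continuity setup
  set GG : ℝ × EuclideanSpace ℝ (Fin (1 + n)) → Matrix (Fin m) (Fin m) ℝ :=
    fun p => Jb p.2 * (Jb p.2)ᵀ + (p.1 ^ 2) • 1 with hGG
  set f : ℝ × EuclideanSpace ℝ (Fin (1 + n)) → Matrix (Fin m) (Fin m) ℝ :=
    fun p => (p.1 ^ 2) • (GG p)⁻¹ with hf
  set φ : ℝ × EuclideanSpace ℝ (Fin (1 + n)) → ℝ :=
    fun p => (∑ i, ∑ j, (f p i j) ^ 2) + ((1 - f p).det - 1) ^ 2 with hφ
  set O : Set (ℝ × EuclideanSpace ℝ (Fin (1 + n))) := {p | IsUnit (GG p).det} with hOdef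
  have hGc : Continuous GG := by
    apply Continuous.add
    · exact (hJb.comp continuous_snd).matrix_mul (hJb.comp continuous_snd).matrix_transpose
    · exact (continuous_fst.pow 2).smul continuous_const
  have hOopen : IsOpen O := by
    have : O = (fun p => (GG p).det) ⁻¹' {x : ℝ | x ≠ 0} := by
      ext p; simp [hOdef, isUnit_iff_ne_zero]
    rw [this]
    exact (hGc.matrix_det).isOpen_preimage _ isOpen_ne
  have hfca : ∀ p ∈ O, ContinuousAt f p := by
    intro p hp
    have hinv : ContinuousAt (fun q => (GG q)⁻¹) p := by
      apply ContinuousAt.comp (continuousAt_matrix_inv (GG p) ?_) hGc.continuousAt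
      rw [Ring.inverse_eq_inv']
      exact continuousAt_inv₀ hp.ne_zero
    exact (continuousAt_fst.pow 2).smul hinv
  have hφca : ∀ p ∈ O, ContinuousAt φ p := by
    intro p hp
    have hentry : ∀ i j : Fin m, ContinuousAt (fun q => f q i j) p := by
      intro i j
      have h := (((continuous_apply j).comp (continuous_apply i)).continuousAt).comp (hfca p hp)
      exact h
    have hdet : ContinuousAt (fun q => (1 - f q).det) p :=
      ContinuousAt.comp (continuous_id.matrix_det.continuousAt)
        (continuousAt_const.sub (hfca p hp))
    apply ContinuousAt.add
    · apply tendsto_finset_sum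
      intro i _
      apply tendsto_finset_sum
      intro j _
      exact (hentry i j).pow 2
    · exact (hdet.sub continuousAt_const).pow 2
  set U : Set (ℝ × EuclideanSpace ℝ (Fin (1 + n))) := O ∩ φ ⁻¹' Set.Iio (η ^ 2) with hUdef
  have hUopen : IsOpen U :=
    ContinuousOn.isOpen_inter_preimage (fun p hp => (hφca p hp).continuousWithinAt)
      hOopen isOpen_Iio
  have hsub : ({(0 : ℝ)} : Set ℝ) ×ˢ Ω ⊆ U := by
    rintro ⟨w, x⟩ ⟨hw, hx⟩
    simp only [Set.mem_singleton_iff] at hw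
    subst hw
    have hG0 : GG ((0 : ℝ), x) = Jb x * (Jb x)ᵀ := by simp [hGG]
    have hf0 : f ((0 : ℝ), x) = 0 := by simp [hf]
    constructor
    · show IsUnit (GG ((0 : ℝ), x)).det
      rw [hG0]
      exact auxFullRankIsUnit _
        (by rw [Matrix.rank_self_mul_transpose]; exact hrank x hx)
    · show φ ((0 : ℝ), x) < η ^ 2
      have : φ ((0 : ℝ), x) = 0 := by simp [hφ, hf0]
      rw [this]; positivity
  obtain ⟨u, v, hu, hv, h0u, hΩv, huv⟩ :=
    generalized_tube_lemma isCompact_singleton hΩ hUopen hsub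
  obtain ⟨w₀, hw₀, hball⟩ := Metric.isOpen_iff.mp hu 0 (h0u rfl)
  refine ⟨w₀, hw₀, ?_⟩
  intro w hw hww₀ a x hx
  have hpU : (w, x) ∈ U := by
    apply huv
    refine ⟨hball ?_, hΩv hx⟩
    rw [Metric.mem_ball, Real.dist_eq, sub_zero, abs_of_pos hw]
    exact hww₀
  have hφp : φ (w, x) < η ^ 2 := hpU.2
  set C : Matrix (Fin m) (Fin m) ℝ := Cw w x with hC
  have hkey : C * Cᵀ = 1 - f (w, x) :=
    auxKeyIdentity (Jb x) (R w x) C (Jh w x) hw (hRut w hw x) (hRdiag w hw x)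
      (hRchol w hw x) (hfac w hw x) (hJh w hw x)
  -- entrywise bounds
  have hsumnonneg : ∀ (M : Matrix (Fin m) (Fin m) ℝ) (i j : Fin m),
      (M i j) ^ 2 ≤ ∑ i', ∑ j', (M i' j') ^ 2 := by
    intro M i j
    calc (M i j) ^ 2 ≤ ∑ j', (M i j') ^ 2 :=
          Finset.single_le_sum (f := fun j' => (M i j') ^ 2)
            (fun k _ => sq_nonneg _) (Finset.mem_univ j)
      _ ≤ ∑ i', ∑ j', (M i' j') ^ 2 :=
          Finset.single_le_sum (f := fun i' => ∑ j', (M i' j') ^ 2)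
            (fun k _ => Finset.sum_nonneg fun l _ => sq_nonneg _) (Finset.mem_univ i)
  have hent : ∀ i j : Fin m, |f (w, x) i j| < η := by
    intro i j
    have h1 : (f (w, x) i j) ^ 2 ≤ φ (w, x) := by
      rw [hφ]
      exact le_add_of_le_of_nonneg (hsumnonneg _ i j) (sq_nonneg _)
    exact abs_lt_of_sq_lt_sq (lt_of_le_of_lt h1 hφp) hη0.le
  have hdet1 : |(1 - f (w, x)).det - 1| < η := by
    have h1 : ((1 - f (w, x)).det - 1) ^ 2 ≤ φ (w, x) := by
      rw [hφ]
      exact le_add_of_nonneg_left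
        (Finset.sum_nonneg fun i _ => Finset.sum_nonneg fun j _ => sq_nonneg _)
  -- combine
    exact abs_lt_of_sq_lt_sq (lt_of_le_of_lt h1 hφp) hη0.le
  -- entrywise bounds on E := C * Cᵀ
  have hEentry : ∀ i j : Fin m, |(C * Cᵀ) i j - (1 : Matrix (Fin m) (Fin m) ℝ) i j| < η := by
    intro i j
    rw [hkey]
    simp only [Matrix.sub_apply]
    rw [show (1 : Matrix (Fin m) (Fin m) ℝ) i j - f (w, x) i j -
        (1 : Matrix (Fin m) (Fin m) ℝ) i j = -(f (w, x) i j) by ring, abs_neg]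
    exact hent i j
  have hEdiag : ∀ b : Fin m, (C * Cᵀ) b b = ∑ j, (C b j) ^ 2 := by
    intro b
    simp [Matrix.mul_apply, Matrix.transpose_apply, sq]
  have hEub : ∀ b : Fin m, ∑ j, (C b j) ^ 2 < 1 + η := by
    intro b
    have := hEentry b b
    rw [hEdiag b, Matrix.one_apply_eq] at this
    linarith [(abs_lt.mp this).2]
  have hElb : ∀ b : Fin m, 1 - η < ∑ j, (C b j) ^ 2 := by
    intro b
    have := hEentry b b
    rw [hEdiag b, Matrix.one_apply_eq] at this
    linarith [(abs_lt.mp this).1]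
  have hCub : ∀ b : Fin m, (C b b) ^ 2 < 1 + η := fun b =>
    lt_of_le_of_lt (Finset.single_le_sum (f := fun j => (C b j) ^ 2)
      (fun k _ => sq_nonneg _) (Finset.mem_univ b)) (hEub b)
  -- determinant bound
  have hdetE : (1 : ℝ) - η < ∏ b, (C b b) ^ 2 := by
    have h1 : (C * Cᵀ).det = ∏ b, (C b b) ^ 2 := by
      rw [Matrix.det_mul, Matrix.det_transpose,
        Matrix.det_of_lowerTriangular C (fun i j h => hCLT w hw x i j h),
        ← Finset.prod_mul_distrib]
      simp [sq]
    have h2 : |(C * Cᵀ).det - 1| < η := by rw [hkey]; exact hdet1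
    rw [h1] at h2
    linarith [(abs_lt.mp h2).1]
  have hprodpos : (0 : ℝ) < ∏ b, (C b b) ^ 2 := lt_of_lt_of_le (by linarith) hdetE.le
  have herase_le : ∏ b ∈ Finset.univ.erase a, (C b b) ^ 2 ≤ (1 + η) ^ (m - 1) := by
    calc ∏ b ∈ Finset.univ.erase a, (C b b) ^ 2
        ≤ ∏ _b ∈ Finset.univ.erase a, (1 + η) :=
          Finset.prod_le_prod (fun b _ => sq_nonneg _) (fun b _ => (hCub b).le)
      _ = (1 + η) ^ (m - 1) := by
          rw [Finset.prod_const, Finset.card_erase_of_mem (Finset.mem_univ a)]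
          simp
  have hpowpos : (0 : ℝ) < (1 + η) ^ (m - 1) := by positivity
  have hCaa_lb : ∀ b : Fin m, L < (C b b) ^ 2 := by
    intro b
    have hsplit : (C b b) ^ 2 * ∏ c ∈ Finset.univ.erase b, (C c c) ^ 2 =
        ∏ c, (C c c) ^ 2 := Finset.mul_prod_erase Finset.univ (fun c => (C c c) ^ 2) (Finset.mem_univ b)
    have herase_le' : ∏ c ∈ Finset.univ.erase b, (C c c) ^ 2 ≤ (1 + η) ^ (m - 1) := by
      calc ∏ c ∈ Finset.univ.erase b, (C c c) ^ 2
          ≤ ∏ _c ∈ Finset.univ.erase b, (1 + η) :=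
            Finset.prod_le_prod (fun c _ => sq_nonneg _) (fun c _ => (hCub c).le)
        _ = (1 + η) ^ (m - 1) := by
            rw [Finset.prod_const, Finset.card_erase_of_mem (Finset.mem_univ b)]
            simp
    rw [hLdef, div_lt_iff₀ hpowpos]
    calc 1 - η < ∏ c, (C c c) ^ 2 := hdetE
      _ = (C b b) ^ 2 * ∏ c ∈ Finset.univ.erase b, (C c c) ^ 2 := hsplit.symm
      _ ≤ (C b b) ^ 2 * (1 + η) ^ (m - 1) :=
          mul_le_mul_of_nonneg_left herase_le' (sq_nonneg _)
  have hL1 : L ≤ 1 := by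
    rw [hLdef, div_le_one hpowpos]
    calc 1 - η ≤ 1 := by linarith
      _ ≤ (1 + η) ^ (m - 1) := one_le_pow₀ (by linarith)
  have h1L : 1 - L ≤ (1 + η - L) / (1 - η) := by
    rw [le_div_iff₀ (by linarith : (0 : ℝ) < 1 - η)]
    nlinarith [hL1, hη0]
  have hLpos : 0 < L := div_pos (by linarith) hpowpos
  constructor
  · rw [abs_sub_lt_iff]
    refine ⟨?_, ?_⟩
    · have := hCaa_lb a
      linarith [h1L, hgη]
    · linarith [hCub a, hηε]
  · set N := ∑ b, (C b b) ^ 2 with hN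
    set D := ∑ i, ∑ j, (C i j) ^ 2 with hD
    have hdnC : dn C = N / D := rfl
    have hmpos : (0 : ℝ) < (m : ℝ) := by
      have : 0 < m := by omega
      exact_mod_cast this
    have huniv : (Finset.univ : Finset (Fin m)).Nonempty :=
      ⟨⟨0, by omega⟩, Finset.mem_univ _⟩
    have hND : N ≤ D := Finset.sum_le_sum fun b _ =>
      Finset.single_le_sum (f := fun j => (C b j) ^ 2)
        (fun k _ => sq_nonneg _) (Finset.mem_univ b)
    have hDlb : (m : ℝ) * (1 - η) < D := by
      have h2 := Finset.sum_lt_sum_of_nonempty huniv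
        (f := fun _ => (1 : ℝ) - η) (g := fun b => ∑ j, (C b j) ^ 2) (fun b _ => hElb b)
      simp [Finset.sum_const, Finset.card_univ, nsmul_eq_mul] at h2
      rw [hD]; linarith
    have hD0 : (0 : ℝ) < D := lt_of_le_of_lt (mul_nonneg hmpos.le (by linarith)) hDlb
    have hDN : D - N < (m : ℝ) * (1 + η - L) := by
      have h1 : ∀ b ∈ (Finset.univ : Finset (Fin m)),
          (∑ j, (C b j) ^ 2) - (C b b) ^ 2 < 1 + η - L := fun b _ => by
        have := hEub b
        have := hCaa_lb b
        linarith
      have h2 := Finset.sum_lt_sum_of_nonempty huniv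
        (g := fun _ => (1 : ℝ) + η - L) h1
      have h3 : D - N = ∑ b, ((∑ j, (C b j) ^ 2) - (C b b) ^ 2) := by
        rw [hD, hN, Finset.sum_sub_distrib]
      rw [h3]
      calc ∑ b, ((∑ j, (C b j) ^ 2) - (C b b) ^ 2)
          < ∑ _b : Fin m, (1 + η - L) := h2
        _ = (m : ℝ) * (1 + η - L) := by
            simp [Finset.sum_const, Finset.card_univ, nsmul_eq_mul]
            ring
    have hdnle : dn C ≤ 1 := by
      rw [hdnC]
      exact (div_le_one hD0).mpr hND
    rw [abs_of_nonneg (by linarith : (0 : ℝ) ≤ 1 - dn C)]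
    have heq : 1 - dn C = (D - N) / D := by
      rw [hdnC]
      field_simp
    rw [heq]
    have hmη : (0 : ℝ) < (m : ℝ) * (1 - η) := by nlinarith
    calc (D - N) / D ≤ (D - N) / ((m : ℝ) * (1 - η)) := by
          apply div_le_div_of_nonneg_left (by linarith) hmη hDlb.le
      _ < ((m : ℝ) * (1 + η - L)) / ((m : ℝ) * (1 - η)) :=
          (div_lt_div_iff_of_pos_right hmη).mpr hDN
      _ = (1 + η - L) / (1 - η) := by
          rw [mul_div_mul_left _ _ (ne_of_gt hmpos)]
      _ < ε := hgη
end

section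
/- Let l ≥ 1, t₁ ∈ ℝ, and for a ∈ {1,…,l} let k_a, ω_a ∈ (0,∞) and M_ab ∈ [0,∞) for 1 ≤ b < a ≤ l. Let ρ ∈ (0, min_a k_a·ω_a) and define Φ ∈ ℝ^{l×l} by Φ_ab = 0 if a < b, Φ_aa = 1, and Φ_ab = ∑_{i=b}^{a−1} k_i·M_ai·Φ_ib/(k_a·ω_a − ρ) if a > b. Let φ₁,…,φ_l : [t₁,∞) → [0,∞) be continuous functions satisfying, for every a and every t ≥ t₁, φ_a(t) ≤ φ_a(t₁)·e^{−k_a·ω_a·(t−t₁)} + ∫_{t₁}^{t} (∑_{b=1}^{a−1} k_b·M_ab·φ_b(s))·e^{−k_a·ω_a·(t−s)} ds. Then for every a ∈ {1,…,l} and every t ≥ t₁, φ_a(t) ≤ (∑_{b=1}^{a} Φ_ab·φ_b(t₁))·e^{−ρ·(t−t₁)}. -/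
open Filter

lemma key_int (κ ρ t₁ t : ℝ) (h : ρ < κ) :
    ∫ s in t₁..t, Real.exp (-ρ*(s-t₁)) * Real.exp (-κ*(t-s))
      = (Real.exp (-ρ*(t-t₁)) - Real.exp (-κ*(t-t₁)))/(κ-ρ) := by
  have hc : κ - ρ ≠ 0 := ne_of_gt (sub_pos.2 h)
  have h1 : ∀ s : ℝ, Real.exp (-ρ*(s-t₁)) * Real.exp (-κ*(t-s))
      = Real.exp (ρ*t₁ - κ*t) * Real.exp ((κ-ρ)*s) := by
    intro s; rw [← Real.exp_add, ← Real.exp_add]; ring_nf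
  simp only [h1]
  rw [intervalIntegral.integral_const_mul]
  have h2 : ∫ s in t₁..t, Real.exp ((κ-ρ)*s)
      = (Real.exp ((κ-ρ)*t) - Real.exp ((κ-ρ)*t₁))/(κ-ρ) := by
    have := intervalIntegral.integral_comp_mul_left (fun x => Real.exp x) (a := t₁) (b := t) hc
    simp [this, integral_exp, div_eq_inv_mul]
  rw [h2, mul_div_assoc', mul_sub, ← Real.exp_add, ← Real.exp_add]
  ring_nf

/-- Exponential decay estimate for a prioritized family of comparison
inequalities.  With `Φ` defined by the triangular recursion
`Φ_ab = 0` for `a < b`, `Φ_aa = 1`, `Φ_ab = (∑_{i=b}^{a-1} k_i M_ai Φ_ib)/(k_a ω_a − ρ)`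
for `a > b`, if each `φ_a` satisfies the integral comparison inequality, then
`φ_a(t) ≤ (∑_{b≤a} Φ_ab φ_b(t₁)) e^{−ρ(t−t₁)}` for all `t ≥ t₁`. -/
theorem exponential_decay_of_prioritized_comparison
    (l : ℕ) (hl : 1 ≤ l) (t₁ : ℝ)
    (k ω : Fin l → ℝ) (hk : ∀ a, 0 < k a) (hω : ∀ a, 0 < ω a)
    (M : Fin l → Fin l → ℝ) (hM : ∀ a b : Fin l, b < a → 0 ≤ M a b)
    (ρ : ℝ) (hρ0 : 0 < ρ) (hρ : ∀ a, ρ < k a * ω a)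
    (Φ : Fin l → Fin l → ℝ)
    (hΦupper : ∀ a b : Fin l, a < b → Φ a b = 0)
    (hΦdiag : ∀ a : Fin l, Φ a a = 1)
    (hΦlower : ∀ a b : Fin l, b < a →
      Φ a b = (∑ i : Fin l, if b ≤ i ∧ i < a then k i * M a i * Φ i b else 0)
        / (k a * ω a - ρ))
    (φ : Fin l → ℝ → ℝ)
    (hφcont : ∀ a, ContinuousOn (φ a) (Set.Ici t₁))
    (hφnn : ∀ a, ∀ t, t₁ ≤ t → 0 ≤ φ a t)
    (hφ : ∀ a : Fin l, ∀ t, t₁ ≤ t →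
      φ a t ≤ φ a t₁ * Real.exp (-(k a * ω a) * (t - t₁))
        + ∫ s in t₁..t,
            (∑ b : Fin l, if b < a then k b * M a b * φ b s else 0)
              * Real.exp (-(k a * ω a) * (t - s))) :
    ∀ a : Fin l, ∀ t, t₁ ≤ t →
      φ a t ≤ (∑ b : Fin l, if b ≤ a then Φ a b * φ b t₁ else 0)
        * Real.exp (-ρ * (t - t₁)) := by
  suffices H : ∀ n : ℕ, ∀ a : Fin l, a.val = n → ∀ t, t₁ ≤ t →
      φ a t ≤ (∑ b : Fin l, if b ≤ a then Φ a b * φ b t₁ else 0)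
        * Real.exp (-ρ * (t - t₁)) by
    intro a t ht; exact H a.val a rfl t ht
  intro n
  induction n using Nat.strong_induction_on with
  | _ n IH =>
  intro a ha t ht
  subst ha
  -- notation
  set κ := k a * ω a with hκdef
  have hκ : ρ < κ := hρ a
  have hρκ0 : (0:ℝ) < κ - ρ := sub_pos.2 hκ
  set C : Fin l → ℝ := fun b => ∑ c : Fin l, if c ≤ b then Φ b c * φ c t₁ else 0 with hC
  have IH' : ∀ b : Fin l, b < a → ∀ s, t₁ ≤ s →
      φ b s ≤ C b * Real.exp (-ρ * (s - t₁)) := by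
    intro b hb s hs
    exact IH b.val hb b rfl s hs
  have hCnn : ∀ b : Fin l, b < a → 0 ≤ C b := by
    intro b hb
    have h1 := IH' b hb t₁ le_rfl
    simp only [sub_self, mul_zero, Real.exp_zero, mul_one] at h1
    exact le_trans (hφnn b t₁ le_rfl) h1
  set A := ∑ b : Fin l, if b < a then k b * M a b * C b else 0 with hA
  set S := ∑ c : Fin l, if c < a then Φ a c * φ c t₁ else 0 with hS
  -- A = (κ - ρ) * S
  have hAS : A = (κ - ρ) * S := by
    have h1 : A = ∑ b : Fin l, ∑ c : Fin l,
        if c ≤ b ∧ b < a then k b * M a b * Φ b c * φ c t₁ else 0 := by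
      rw [hA]
      apply Finset.sum_congr rfl; intro b _
      by_cases hb : b < a
      · simp only [hb, if_true, and_true, hC, Finset.mul_sum]
        apply Finset.sum_congr rfl; intro c _
        by_cases hc : c ≤ b
        · simp only [hc, if_true, true_and, hb]; ring
        · simp [hc]
      · simp only [hb, if_false, and_false, if_false]
        simp [hb]
    rw [h1, Finset.sum_comm, hS, Finset.mul_sum]
    apply Finset.sum_congr rfl; intro c _
    by_cases hc : c < a
    · have hΦac : (∑ i : Fin l, if c ≤ i ∧ i < a then k i * M a i * Φ i c else 0)
          = (κ - ρ) * Φ a c := by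
        have h2 := hΦlower a c hc
        rw [eq_div_iff (ne_of_gt hρκ0)] at h2
        rw [← h2]; ring
      calc (∑ b : Fin l, if c ≤ b ∧ b < a then k b * M a b * Φ b c * φ c t₁ else 0)
          = (∑ b : Fin l, if c ≤ b ∧ b < a then k b * M a b * Φ b c else 0) * φ c t₁ := by
            rw [Finset.sum_mul]
            apply Finset.sum_congr rfl; intro b _
            split_ifs <;> simp
        _ = (κ - ρ) * Φ a c * φ c t₁ := by rw [hΦac]
        _ = (κ - ρ) * (if c < a then Φ a c * φ c t₁ else 0) := by
            simp [hc]; ring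
    · simp only [hc, if_false, mul_zero]
      apply Finset.sum_eq_zero; intro b _
      rw [if_neg]; rintro ⟨h1, h2⟩; exact hc (lt_of_le_of_lt h1 h2)
  have hAnn : 0 ≤ A := by
    rw [hA]
    apply Finset.sum_nonneg; intro b _
    by_cases hb : b < a
    · simp only [hb, if_true]
      exact mul_nonneg (mul_nonneg (hk b).le (hM a b hb)) (hCnn b hb)
    · simp [hb]
  have hSnn : 0 ≤ S := by nlinarith
  -- integral comparison
  have hsub : Set.uIcc t₁ t ⊆ Set.Ici t₁ := by
    rw [Set.uIcc_of_le ht]; exact Set.Icc_subset_Ici_self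
  have hf_int : IntervalIntegrable
      (fun s => (∑ b : Fin l, if b < a then k b * M a b * φ b s else 0)
        * Real.exp (-κ * (t - s))) MeasureTheory.volume t₁ t := by
    apply ContinuousOn.intervalIntegrable
    apply ContinuousOn.mul
    · apply continuousOn_finset_sum
      intro b _
      by_cases hb : b < a
      · simp only [hb, if_true]
        exact continuousOn_const.mul ((hφcont b).mono hsub)
      · simp only [hb, if_false]; exact continuousOn_const
    · exact (Real.continuous_exp.comp (continuous_const.mul (continuous_const.sub continuous_id))).continuousOn
  have hg_int : IntervalIntegrable
      (fun s => A * (Real.exp (-ρ * (s - t₁)) * Real.exp (-κ * (t - s))))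
      MeasureTheory.volume t₁ t := by
    apply Continuous.intervalIntegrable
    exact continuous_const.mul
      ((Real.continuous_exp.comp (continuous_const.mul (continuous_id.sub continuous_const))).mul
       (Real.continuous_exp.comp (continuous_const.mul (continuous_const.sub continuous_id))))
  have hint : (∫ s in t₁..t,
        (∑ b : Fin l, if b < a then k b * M a b * φ b s else 0) * Real.exp (-κ * (t - s)))
      ≤ ∫ s in t₁..t, A * (Real.exp (-ρ * (s - t₁)) * Real.exp (-κ * (t - s))) := by
    apply intervalIntegral.integral_mono_on ht hf_int hg_int
    intro s hs
    have hsum : (∑ b : Fin l, if b < a then k b * M a b * φ b s else 0)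
        ≤ A * Real.exp (-ρ * (s - t₁)) := by
      rw [hA, Finset.sum_mul]
      apply Finset.sum_le_sum
      intro b _
      by_cases hb : b < a
      · simp only [hb, if_true]
        calc k b * M a b * φ b s
            ≤ k b * M a b * (C b * Real.exp (-ρ * (s - t₁))) :=
              mul_le_mul_of_nonneg_left (IH' b hb s hs.1)
                (mul_nonneg (hk b).le (hM a b hb))
          _ = k b * M a b * C b * Real.exp (-ρ * (s - t₁)) := by ring
      · simp [hb]
    calc (∑ b : Fin l, if b < a then k b * M a b * φ b s else 0) * Real.exp (-κ * (t - s))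
        ≤ (A * Real.exp (-ρ * (s - t₁))) * Real.exp (-κ * (t - s)) :=
          mul_le_mul_of_nonneg_right hsum (Real.exp_nonneg _)
      _ = A * (Real.exp (-ρ * (s - t₁)) * Real.exp (-κ * (t - s))) := by ring
  have hIg : (∫ s in t₁..t, A * (Real.exp (-ρ * (s - t₁)) * Real.exp (-κ * (t - s))))
      = A * ((Real.exp (-ρ * (t - t₁)) - Real.exp (-κ * (t - t₁))) / (κ - ρ)) := by
    rw [intervalIntegral.integral_const_mul, key_int κ ρ t₁ t hκ]
  -- combine
  have h0 := hφ a t ht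
  rw [← hκdef] at h0
  have hCa : C a = φ a t₁ + S := by
    have hsplit : ∀ b : Fin l, (if b ≤ a then Φ a b * φ b t₁ else 0)
        = (if b = a then Φ a b * φ b t₁ else 0) + (if b < a then Φ a b * φ b t₁ else 0) := by
      intro b
      rcases lt_trichotomy b a with h | h | h
      · simp [h, le_of_lt h, ne_of_lt h]
      · simp [h]
      · simp [not_le.2 h, h.ne', not_lt.2 h.le]
    rw [hC]
    simp only [hsplit]
    rw [Finset.sum_add_distrib, ← hS, Finset.sum_ite_eq' Finset.univ a
      (fun b => Φ a b * φ b t₁)]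
    simp [hΦdiag a]
  have heρ := Real.exp_nonneg (-ρ * (t - t₁))
  have heκ := Real.exp_nonneg (-κ * (t - t₁))
  have hexp : Real.exp (-κ * (t - t₁)) ≤ Real.exp (-ρ * (t - t₁)) := by
    apply Real.exp_le_exp.2
    nlinarith
  have hid : A * ((Real.exp (-ρ * (t - t₁)) - Real.exp (-κ * (t - t₁))) / (κ - ρ))
      = S * (Real.exp (-ρ * (t - t₁)) - Real.exp (-κ * (t - t₁))) := by
    rw [hAS]; field_simp
  have h2 : φ a t₁ * Real.exp (-κ * (t - t₁)) ≤ φ a t₁ * Real.exp (-ρ * (t - t₁)) :=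
    mul_le_mul_of_nonneg_left hexp (hφnn a t₁ le_rfl)
  have h3 : S * (Real.exp (-ρ * (t - t₁)) - Real.exp (-κ * (t - t₁)))
      ≤ S * Real.exp (-ρ * (t - t₁)) :=
    mul_le_mul_of_nonneg_left (by linarith) hSnn
  have h4 : (∫ s in t₁..t,
        (∑ b : Fin l, if b < a then k b * M a b * φ b s else 0) * Real.exp (-κ * (t - s)))
      ≤ S * (Real.exp (-ρ * (t - t₁)) - Real.exp (-κ * (t - t₁))) :=
    hint.trans_eq (hIg.trans hid)
  have : φ a t ≤ (φ a t₁ + S) * Real.exp (-ρ * (t - t₁)) := by nlinarith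
  calc φ a t ≤ (φ a t₁ + S) * Real.exp (-ρ * (t - t₁)) := this
    _ = C a * Real.exp (-ρ * (t - t₁)) := by rw [hCa]
end
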